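/- arXiv:1505.02299 — 7 statements merged into one kernel-verified Lean document; each statement's English description precedes it below -/
import Mathlib

section
/- The Bouwer graph B(k,m,n) is bipartite if and only if m is even. -/
/-- The Bouwer relation: `(a,b)` is related to `(a+1,c)` when `c = b` or `c`
differs from `b` in exactly one coordinate `j`, where `c j = b j + 2 ^ a`
(the power of `2` computed in `ZMod n`). -/
def bouwerRel (k m n : ℕ) (u v : ZMod m × (Fin (k - 1) → ZMod n)) : Prop :=
  v.1 = u.1 + 1 ∧
    (v.2 = u.2 ∨ ∃ j : Fin (k - 1),
      (∀ i : Fin (k - 1), i ≠ j → v.2 i = u.2 i) ∧ v.2 j = u.2 j + 2 ^ (u.1).val)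

/-- The Bouwer graph `B(k,m,n)`, with vertex set `ZMod m × (ZMod n)^(k-1)`. -/
def bouwer (k m n : ℕ) : SimpleGraph (ZMod m × (Fin (k - 1) → ZMod n)) :=
  SimpleGraph.fromRel (bouwerRel k m n)


/-- The Bouwer graph `B(k,m,n)` is bipartite (2-colorable) if and only if `m` is even. -/
theorem bouwer_bipartite_iff (k m n : ℕ) (hk : 1 < k) (hm : 1 < m) (hn : 1 < n)
    (h2 : (2 : ZMod n) ^ m = 1) :
    (bouwer k m n).Colorable 2 ↔ Even m := by
  haveI : Fact (1 < m) := ⟨hm⟩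
  have flip : ∀ x y : ZMod 2, x ≠ y → y = x + 1 := by decide
  have hadj : ∀ a : ZMod m, (bouwer k m n).Adj (a, 0) (a + 1, 0) := by
    intro a
    refine ⟨?_, Or.inl ⟨rfl, Or.inl rfl⟩⟩
    intro h
    have h1 : a = a + 1 := congrArg Prod.fst h
    have : (1 : ZMod m) = 0 := by
      have := left_eq_add.mp h1
      exact this
    exact one_ne_zero this
  constructor
  · rintro ⟨C⟩
    let C' : (bouwer k m n).Coloring (ZMod 2) := C
    have key : ∀ i : ℕ, C' ((i : ZMod m), 0) = C' (0, 0) + (i : ZMod 2) := by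
      intro i
      induction i with
      | zero => simp
      | succ j ih =>
        have h := C'.valid (hadj (j : ZMod m))
        have hstep : C' ((j : ZMod m) + 1, 0) = C' ((j : ZMod m), 0) + 1 :=
          flip _ _ h
        have hcast : ((j + 1 : ℕ) : ZMod m) = (j : ZMod m) + 1 := by push_cast; ring
        rw [hcast, hstep, ih]
        push_cast
        ring
    have hm0 := key m
    rw [ZMod.natCast_self] at hm0
    have : (m : ZMod 2) = 0 := by
      have := hm0.symm
      rwa [left_eq_add] at hm0
    have hdvd : (2 : ℕ) ∣ m := (ZMod.natCast_eq_zero_iff m 2).mp this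
    exact even_iff_two_dvd.mpr hdvd
  · intro he
    have hdvd : (2 : ℕ) ∣ m := even_iff_two_dvd.mp he
    refine ⟨SimpleGraph.Coloring.mk
      (fun u => (ZMod.castHom hdvd (ZMod 2) u.1 : ZMod 2)) ?_⟩
    rintro u v ⟨hne, hrel⟩ hcol
    have h1 : v.1 = u.1 + 1 ∨ u.1 = v.1 + 1 := by
      rcases hrel with h | h
      · exact Or.inl h.1
      · exact Or.inr h.1
    have hx : ∀ x : ZMod 2, x ≠ x + 1 := by decide
    rcases h1 with h | h
    · rw [h] at hcol
      simp only [map_add, map_one] at hcol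
      exact hx _ hcol
    · rw [h] at hcol
      simp only [map_add, map_one] at hcol
      exact hx _ hcol.symm
end

section
/- If m > 6 and n > 7, then the Bouwer graph B(k,m,n) contains no cycle of length 3, 4, or 5. -/
open SimpleGraph

section SingleOrZero

variable {ι G : Type*} [DecidableEq ι] [AddCommGroup G]

def IsSingleOrZero (t : G) (d : ι → G) : Prop :=
  d = 0 ∨ ∃ j, d = Pi.single j t

theorem IsSingleOrZero.add_eq_add {t t' : G} (ht : t ≠ 0) (ht' : t' ≠ 0) (htt : t + t' ≠ 0)
    {d₁ d₂ d₃ d₄ : ι → G} (h₁ : IsSingleOrZero t d₁) (h₂ : IsSingleOrZero t' d₂)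
    (h₃ : IsSingleOrZero t d₃) (h₄ : IsSingleOrZero t' d₄) (he : d₁ + d₂ = d₃ + d₄) :
    (d₁ = d₃ ∧ d₂ = d₄) ∨ (t = t' ∧ d₁ = d₄ ∧ d₂ = d₃) := by
  rcases h₁ with rfl | ⟨i₁, rfl⟩ <;> rcases h₂ with rfl | ⟨i₂, rfl⟩ <;>
    rcases h₃ with rfl | ⟨i₃, rfl⟩ <;> rcases h₄ with rfl | ⟨i₄, rfl⟩
  -- In each of the sixteen cases, evaluating `he` at the indices involved decides it.
  all_goals
    have hv := congr_fun he
    (try have e₁ := hv i₁); (try have e₂ := hv i₂)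
    (try have e₃ := hv i₃); (try have e₄ := hv i₄)
    clear hv
    simp only [Pi.add_apply, Pi.zero_apply, Pi.single_apply, add_zero, zero_add] at *
  all_goals grind

theorem eq_or_eq_of_isSingleOrZero_sub {t : G} (ht : t ≠ 0) (htt : t + t ≠ 0)
    {a b c d : ι → G} (hab : IsSingleOrZero t (b - a)) (hcb : IsSingleOrZero t (b - c))
    (had : IsSingleOrZero t (d - a)) (hcd : IsSingleOrZero t (d - c)) : a = c ∨ b = d := by
  rcases hab.add_eq_add ht ht htt hcd had hcb (by abel) with ⟨hbd, -⟩ | ⟨-, hac, -⟩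
  · exact Or.inr (sub_left_injective hbd)
  · exact Or.inl (sub_right_injective hac)

theorem eq_of_isSingleOrZero_sub {t t' : G} (ht : t ≠ 0) (ht' : t' ≠ 0) (htt : t + t' ≠ 0)
    (hne : t ≠ t') {a b c d : ι → G} (hab : IsSingleOrZero t (b - a))
    (hbc : IsSingleOrZero t' (c - b)) (had : IsSingleOrZero t (d - a))
    (hdc : IsSingleOrZero t' (c - d)) : b = d := by
  rcases hab.add_eq_add ht ht' htt hbc had hdc (by abel) with ⟨hbd, -⟩ | ⟨h, -⟩
  · exact sub_left_injective hbd
  · exact absurd h hne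

end SingleOrZero

section Levelling

variable {V : Type*} {G : SimpleGraph V} {m : ℕ} {f : V → ZMod m}

/-- A graph homomorphism from `G` to the cycle on `ZMod m`. -/
def IsLevelling (G : SimpleGraph V) (f : V → ZMod m) : Prop :=
  ∀ ⦃u v⦄, G.Adj u v → f v = f u + 1 ∨ f u = f v + 1

namespace IsLevelling

theorem exists_add_eq_add (hf : IsLevelling G f) {u v : V} (p : G.Walk u v) :
    ∃ s t : ℕ, s + t = p.length ∧ f u + s = f v + t := by
  induction p with
  | nil => exact ⟨0, 0, rfl, rfl⟩
  | cons h _ ih =>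
    obtain ⟨s, t, hst, he⟩ := ih
    rcases hf h with hl | hl
    · refine ⟨s + 1, t, by rw [Walk.length_cons]; omega, ?_⟩
      push_cast
      linear_combination he - hl
    · refine ⟨s, t + 1, by rw [Walk.length_cons]; omega, ?_⟩
      push_cast
      linear_combination he + hl

theorem even_length (hf : IsLevelling G f) {u : V} (p : G.Walk u u) (hp : p.length < m) :
    Even p.length := by
  obtain ⟨s, t, hst, he⟩ := hf.exists_add_eq_add p
  have hst' : s % m = t % m := (ZMod.natCast_eq_natCast_iff' s t m).1 (add_left_cancel he)
  rw [Nat.mod_eq_of_lt (by omega), Nat.mod_eq_of_lt (by omega)] at hst'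
  exact ⟨s, by omega⟩

theorem eq_or_eq_of_adj (hf : IsLevelling G f) (h4 : (4 : ZMod m) ≠ 0) {x₀ x₁ x₂ x₃ : V}
    (h₀ : G.Adj x₀ x₁) (h₁ : G.Adj x₁ x₂) (h₂ : G.Adj x₂ x₃) (h₃ : G.Adj x₃ x₀) :
    f x₀ = f x₂ ∨ f x₁ = f x₃ := by
  rcases hf h₀ with h₀ | h₀ <;> rcases hf h₁ with h₁ | h₁ <;>
    rcases hf h₂ with h₂ | h₂ <;> rcases hf h₃ with h₃ | h₃ <;> grind

theorem length_ne_four (hf : IsLevelling G f) (h4 : (4 : ZMod m) ≠ 0)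
    (hG : ∀ x z, x ≠ z → f x = f z → (G.commonNeighbors x z).Subsingleton) {u : V}
    {c : G.Walk u u} (hc : c.IsCycle) : c.length ≠ 4 := by
  intro hlen
  have hne : ∀ i j, i < j → j ≤ 3 → c.getVert i ≠ c.getVert j := fun i j hij hj h =>
    hij.ne (hc.getVert_injOn' (by simp; omega) (by simp; omega) h)
  have hadj : ∀ i, i < 4 → G.Adj (c.getVert i) (c.getVert (i + 1)) := fun i hi =>
    c.adj_getVert_succ (by omega)
  have h₃ : G.Adj (c.getVert 3) (c.getVert 0) := by
    simpa [← hlen, c.getVert_zero] using hadj 3 (by omega)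
  have h₀ := hadj 0 (by omega)
  have h₁ := hadj 1 (by omega)
  have h₂ := hadj 2 (by omega)
  rcases hf.eq_or_eq_of_adj h4 h₀ h₁ h₂ h₃ with h02 | h13
  · exact hne 1 3 (by omega) le_rfl
      (hG _ _ (hne 0 2 (by omega) (by omega)) h02 ⟨h₀, h₁.symm⟩ ⟨h₃.symm, h₂⟩)
  · exact hne 0 2 (by omega) (by omega)
      (hG _ _ (hne 1 3 (by omega) le_rfl) h13 ⟨h₀.symm, h₃⟩ ⟨h₁, h₂.symm⟩)

end IsLevelling

end Levelling

theorem pow_zmod_val_add_one {M : Type*} [Monoid M] {x : M} {m : ℕ} [NeZero m] (hx : x ^ m = 1)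
    (a : ZMod m) : x ^ (a + 1).val = x ^ a.val * x := by
  rw [← pow_succ]
  refine pow_eq_pow_of_modEq ?_ hx
  rw [← ZMod.natCast_eq_natCast_iff]
  push_cast
  simp only [ZMod.natCast_zmod_val]

theorem ZMod.natCast_ne_zero_of_lt {a n : ℕ} (h0 : 0 < a) (h : a < n) : (a : ZMod n) ≠ 0 := by
  rw [Ne, ZMod.natCast_eq_zero_iff]
  exact Nat.not_dvd_of_pos_of_lt h0 h

section Bouwer

variable {k m n : ℕ}

theorem bouwerRel_iff {u v : ZMod m × (Fin (k - 1) → ZMod n)} :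
    bouwerRel k m n u v ↔
      v.1 = u.1 + 1 ∧ IsSingleOrZero ((2 : ZMod n) ^ u.1.val) (v.2 - u.2) := by
  refine and_congr_right fun _ => or_congr sub_eq_zero.symm (exists_congr fun j => ?_)
  constructor
  · rintro ⟨hoff, hj⟩
    ext i
    rcases eq_or_ne i j with rfl | hi
    · simp [hj]
    · simp [hi, hoff i hi]
  · intro h
    refine ⟨fun i hi => ?_, ?_⟩
    · simpa [hi, sub_eq_zero] using congr_fun h i
    · simpa [sub_eq_iff_eq_add'] using congr_fun h j

theorem bouwer_isLevelling : IsLevelling (bouwer k m n) Prod.fst := fun u v h =>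
  ((fromRel_adj _ u v).1 h).2.imp And.left And.left

theorem bouwerRel_or_bouwerRel_of_adj_of_adj (h2m : (2 : ZMod m) ≠ 0)
    {x y z : ZMod m × (Fin (k - 1) → ZMod n)} (hl : x.1 = z.1)
    (hx : (bouwer k m n).Adj x y) (hz : (bouwer k m n).Adj z y) :
    (bouwerRel k m n x y ∧ bouwerRel k m n z y) ∨
      (bouwerRel k m n y x ∧ bouwerRel k m n y z) := by
  rcases ((fromRel_adj _ x y).1 hx).2 with hx | hx <;>
    rcases ((fromRel_adj _ z y).1 hz).2 with hz | hz
  · exact Or.inl ⟨hx, hz⟩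
  · exact absurd (by linear_combination -hz.1 - hx.1 - hl) h2m
  · exact absurd (by linear_combination -hx.1 - hz.1 + hl) h2m
  · exact Or.inr ⟨hx, hz⟩

variable [NeZero m] [Fact (1 < n)] (h2 : (2 : ZMod n) ^ m = 1)
include h2

theorem eq_or_eq_of_bouwerRel {a b c d : ZMod m × (Fin (k - 1) → ZMod n)}
    (hab : bouwerRel k m n a b) (hcb : bouwerRel k m n c b) (had : bouwerRel k m n a d)
    (hcd : bouwerRel k m n c d) : a = c ∨ b = d := by
  rw [bouwerRel_iff] at hab hcb had hcd
  have hac : a.1 = c.1 := add_right_cancel (hab.1.symm.trans hcb.1)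
  have hbd : b.1 = d.1 := hab.1.trans had.1.symm
  have h2u := IsUnit.of_pow_eq_one h2 (NeZero.ne m)
  have hu := h2u.pow a.1.val
  rw [← hac] at hcb hcd
  refine (eq_or_eq_of_isSingleOrZero_sub hu.ne_zero ?_ hab.2 hcb.2 had.2 hcd.2).imp
    (Prod.ext hac) (Prod.ext hbd)
  rw [← two_mul]
  exact (h2u.mul hu).ne_zero

theorem eq_of_bouwerRel (h3 : (3 : ZMod n) ≠ 0) {a b c d : ZMod m × (Fin (k - 1) → ZMod n)}
    (hab : bouwerRel k m n a b) (hbc : bouwerRel k m n b c) (had : bouwerRel k m n a d)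
    (hdc : bouwerRel k m n d c) : b = d := by
  rw [bouwerRel_iff] at hab hbc had hdc
  have hbd : b.1 = d.1 := hab.1.trans had.1.symm
  have h2u := IsUnit.of_pow_eq_one h2 (NeZero.ne m)
  have hu := h2u.pow a.1.val
  -- the second steps have size `2 ^ (a.1 + 1).val = 2 ^ a.1.val * 2`, unlike the first ones
  rw [hab.1, pow_zmod_val_add_one h2] at hbc
  rw [had.1, pow_zmod_val_add_one h2] at hdc
  refine Prod.ext hbd (eq_of_isSingleOrZero_sub hu.ne_zero ?_ ?_ ?_ hab.2 hbc.2 had.2 hdc.2)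
  · exact (hu.mul h2u).ne_zero
  · rw [show (2 : ZMod n) ^ a.1.val + 2 ^ a.1.val * 2 = 3 * 2 ^ a.1.val by ring]
    exact hu.mul_left_eq_zero.not.mpr h3
  · exact fun h => hu.ne_zero (by linear_combination -h)

theorem bouwer_commonNeighbors_subsingleton (h2m : (2 : ZMod m) ≠ 0) (h3 : (3 : ZMod n) ≠ 0)
    {x z : ZMod m × (Fin (k - 1) → ZMod n)} (hxz : x ≠ z) (hl : x.1 = z.1) :
    ((bouwer k m n).commonNeighbors x z).Subsingleton := by
  rintro y ⟨hxy, hzy⟩ w ⟨hxw, hzw⟩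
  rcases bouwerRel_or_bouwerRel_of_adj_of_adj h2m hl hxy hzy with ⟨hxy, hzy⟩ | ⟨hyx, hyz⟩ <;>
    rcases bouwerRel_or_bouwerRel_of_adj_of_adj h2m hl hxw hzw with ⟨hxw, hzw⟩ | ⟨hwx, hwz⟩
  · exact (eq_or_eq_of_bouwerRel h2 hxy hzy hxw hzw).resolve_left hxz
  · exact absurd (eq_of_bouwerRel h2 h3 hwx hxy hwz hzy) hxz
  · exact absurd (eq_of_bouwerRel h2 h3 hyx hxw hyz hzw) hxz
  · exact (eq_or_eq_of_bouwerRel h2 hyx hwx hyz hwz).resolve_right hxz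

end Bouwer

theorem bouwer_no_short_cycles_general (k m n : ℕ) (hm : 6 < m) (hn : 7 < n)
    (h2 : (2 : ZMod n) ^ m = 1) :
    ∀ (v : ZMod m × (Fin (k - 1) → ZMod n)) (c : (bouwer k m n).Walk v v),
      c.IsCycle → c.length ≠ 3 ∧ c.length ≠ 4 ∧ c.length ≠ 5 := by
  intro v c hc
  have : NeZero m := ⟨by omega⟩
  have : Fact (1 < n) := ⟨by omega⟩
  have hlev : IsLevelling (bouwer k m n) Prod.fst := bouwer_isLevelling
  have heven : c.length < m → Even c.length := hlev.even_length c
  have h2m : ((2 : ℕ) : ZMod m) ≠ 0 := ZMod.natCast_ne_zero_of_lt two_pos (by omega)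
  have h4m : ((4 : ℕ) : ZMod m) ≠ 0 := ZMod.natCast_ne_zero_of_lt four_pos (by omega)
  have h3n : ((3 : ℕ) : ZMod n) ≠ 0 := ZMod.natCast_ne_zero_of_lt three_pos (by omega)
  push_cast at h2m h4m h3n
  refine ⟨fun h => ?_, hlev.length_ne_four h4m ?_ hc, fun h => ?_⟩
  · exact (by decide : ¬Even 3) (h ▸ heven (by omega))
  · exact fun x z hxz hl => bouwer_commonNeighbors_subsingleton h2 h2m h3n hxz hl
  · exact (by decide : ¬Even 5) (h ▸ heven (by omega))

/-- If `m > 6` and `n > 7`, then the Bouwer graph `B(k,m,n)` contains no cycle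
of length 3, 4 or 5. -/
theorem bouwer_no_short_cycles (k m n : ℕ) (hk : 1 < k) (hm : 6 < m) (hn : 7 < n)
    (h2 : (2 : ZMod n) ^ m = 1) :
    ∀ (v : ZMod m × (Fin (k - 1) → ZMod n)) (c : (bouwer k m n).Walk v v),
      c.IsCycle → c.length ≠ 3 ∧ c.length ≠ 4 ∧ c.length ≠ 5 :=
  bouwer_no_short_cycles_general k m n hm hn h2
end

section
/- If m > 6 and n > 7, then the walk (0,0) – (1,0) – (2,2e_{k-1}) – (1,2e_{k-1}) – (0,e_{k-1}) – (1,e_{k-1}) – (0,0) is a 6-cycle in B(k,m,n); consequently B(k,m,n) has girth 6. -/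
/-!
Adjacent vertices of `B(k,m,n)` lie on consecutive levels of `ZMod m`, so a closed walk shorter
than `m` climbs as often as it descends and has even length: there are no 3- or 5-cycles.
An edge climbing from level `a` changes the second coordinate by `0` or by `2^a e_j`. A 4-cycle is
either a square on two levels, where an identity `x + z = y + w` between such increments forces
two opposite vertices to coincide, or a diamond on three levels, whose upper increments have
weight `2^(a+1) = 2 * 2^a`; since `2^a`, `2 * 2^a` and `3 * 2^a` are nonzero in `ZMod n`, these
cannot cancel against the lower ones, so the two middle vertices coincide.
-/

open SimpleGraph

section ZeroOrSingle

variable {ι R : Type*} [DecidableEq ι] [AddCommGroup R]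

def IsZeroOrSingle (c : R) (x : ι → R) : Prop :=
  x = 0 ∨ ∃ j, x = Pi.single j c

lemma IsZeroOrSingle.apply_eq_zero_or {c : R} {x : ι → R} (hx : IsZeroOrSingle c x) (i : ι) :
    x i = 0 ∨ x i = c := by
  rcases hx with rfl | ⟨j, rfl⟩
  · exact .inl rfl
  · rw [Pi.single_apply]; split_ifs <;> simp

lemma IsZeroOrSingle.apply_eq_zero_of_ne {c : R} {x y : ι → R} (hx : IsZeroOrSingle c x)
    {i : ι} (hy : y = Pi.single i c) (hxy : x ≠ y) : x i = 0 := by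
  rcases hx with rfl | ⟨j, rfl⟩
  · rfl
  · have hij : i ≠ j := by rintro rfl; exact hxy hy.symm
    simp [hij]

lemma single_add_ne_add_of_isZeroOrSingle {c : R} (hc : c ≠ 0) (hc2 : c + c ≠ 0) {i : ι}
    {x y z w : ι → R} (hx : x = Pi.single i c) (hy : IsZeroOrSingle c y)
    (hz : IsZeroOrSingle c z) (hw : IsZeroOrSingle c w) (hxy : y ≠ x) (hxw : w ≠ x) :
    x + z ≠ y + w := by
  intro h
  have hi := congrFun h i
  simp only [Pi.add_apply, hx, Pi.single_eq_same, hy.apply_eq_zero_of_ne hx hxy,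
    hw.apply_eq_zero_of_ne hx hxw, add_zero] at hi
  rcases hz.apply_eq_zero_or i with hzi | hzi <;> rw [hzi] at hi
  · exact hc (by simpa using hi)
  · exact hc2 hi

lemma IsZeroOrSingle.add_ne_add {c : R} (hc : c ≠ 0) (hc2 : c + c ≠ 0) {x y z w : ι → R}
    (hx : IsZeroOrSingle c x) (hy : IsZeroOrSingle c y) (hz : IsZeroOrSingle c z)
    (hw : IsZeroOrSingle c w) (hxy : x ≠ y) (hyz : y ≠ z) (hzw : z ≠ w) (hwx : w ≠ x) :
    x + z ≠ y + w := by
  rcases hx with rfl | ⟨i, hi⟩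
  · rcases hz with rfl | ⟨i, hi⟩
    · obtain ⟨i, hi⟩ := hy.resolve_left hxy.symm
      exact fun h => single_add_ne_add_of_isZeroOrSingle hc hc2 hi (.inl rfl) hw (.inl rfl)
        hxy hyz.symm h.symm
    · rw [add_comm]
      exact single_add_ne_add_of_isZeroOrSingle hc hc2 hi hy (.inl rfl) hw hyz hzw.symm
  · exact single_add_ne_add_of_isZeroOrSingle hc hc2 hi hy hz hw hxy.symm hwx

end ZeroOrSingle

lemma eq_of_sub_eq_sub_of_apply_eq_zero_or {ι R : Type*} [AddCommGroup R] {a b : R}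
    (ha : a ≠ 0) (hab : a ≠ b) (hab' : a ≠ -b) {x y z w : ι → R}
    (hx : ∀ i, x i = 0 ∨ x i = a) (hy : ∀ i, y i = 0 ∨ y i = a)
    (hz : ∀ i, z i = 0 ∨ z i = b) (hw : ∀ i, w i = 0 ∨ w i = b) (h : x - y = z - w) :
    x = y := by
  funext i
  by_contra hne
  have hi := congrFun h i
  simp only [Pi.sub_apply] at hi
  rcases hx i with hx | hx <;> rcases hy i with hy | hy <;> rcases hz i with hz | hz <;>
    rcases hw i with hw | hw <;> simp only [hx, hy, hz, hw] at hi hne <;> grind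

lemma ZMod.natCast_ne_natCast_of_lt {a b n : ℕ} (ha : a < n) (hb : b < n) (hab : a ≠ b) :
    (a : ZMod n) ≠ b := by
  rwa [Ne, ZMod.natCast_eq_natCast_iff', Nat.mod_eq_of_lt ha, Nat.mod_eq_of_lt hb]

lemma pow_zmod_val_add {M : Type*} [Monoid M] {m : ℕ} [NeZero m] {x : M} (hx : x ^ m = 1)
    (a b : ZMod m) : x ^ (a + b).val = x ^ a.val * x ^ b.val := by
  rw [ZMod.val_add, ← pow_eq_pow_mod _ hx, pow_add]

namespace SimpleGraph.Walk

variable {V : Type*} {G : SimpleGraph V}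

lemma exists_int_map_eq_add {M : Type*} [AddCommGroupWithOne M] {f : V → M}
    (hf : ∀ u v, G.Adj u v → f v = f u + 1 ∨ f u = f v + 1) {u v : V} (p : G.Walk u v) :
    ∃ z : ℤ, |z| ≤ p.length ∧ Even (z + p.length) ∧ f v = f u + z := by
  induction p with
  | nil => exact ⟨0, by simp, by simp, by simp⟩
  | @cons u v w h p ih =>
    obtain ⟨z, hz, hev, hfw⟩ := ih
    rw [length_cons, Nat.cast_add, Nat.cast_one]
    rcases hf u v h with huv | huv
    · refine ⟨z + 1, by grind, by grind, ?_⟩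
      rw [hfw, huv]; push_cast; abel
    · refine ⟨z - 1, by grind, by grind, ?_⟩
      rw [hfw, huv]; push_cast; abel

lemma even_length_of_map_zmod {m : ℕ} {f : V → ZMod m}
    (hf : ∀ u v, G.Adj u v → f v = f u + 1 ∨ f u = f v + 1) {u : V} (p : G.Walk u u)
    (hp : p.length < m) : Even p.length := by
  obtain ⟨z, hz, hev, hfu⟩ := p.exists_int_map_eq_add hf
  have hz0 : z = 0 := by
    refine Int.eq_zero_of_abs_lt_dvd (m := m) ?_ (by omega)
    rw [← ZMod.intCast_zmod_eq_zero_iff_dvd]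
    simpa using hfu
  simpa [hz0] using hev

lemma IsCycle.length_ne_four {u : V} {p : G.Walk u u} (hp : p.IsCycle)
    (hG : ∀ v w, v ≠ w → (G.commonNeighbors v w).Subsingleton) : p.length ≠ 4 := by
  intro h4
  have hadj (i : ℕ) (hi : i < 4) := p.adj_getVert_succ (i := i) (by omega)
  have hinj := hp.getVert_injOn
  have h13 : p.getVert 1 ≠ p.getVert 3 := fun h => by
    have := hinj (by simp; omega) (by simp; omega) h; omega
  have h24 : p.getVert 2 ≠ p.getVert 4 := fun h => by
    have := hinj (by simp; omega) (by simp; omega) h; omega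
  have h40 : p.getVert 4 = p.getVert 0 := by rw [← h4, getVert_length, getVert_zero]
  refine h24 (hG _ _ h13 ?_ ?_)
  · exact ⟨hadj 1 (by omega), (hadj 2 (by omega)).symm⟩
  · rw [mem_commonNeighbors, h40]
    exact ⟨(hadj 0 (by omega)).symm, h40 ▸ hadj 3 (by omega)⟩

end SimpleGraph.Walk

section Bouwer

variable {k m n : ℕ} {u v w x y p q : ZMod m × (Fin (k - 1) → ZMod n)}

lemma bouwerRel.exists_isZeroOrSingle (h : bouwerRel k m n u v) :
    ∃ d, IsZeroOrSingle (2 ^ u.1.val) d ∧ v.2 = u.2 + d := by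
  rcases h.2 with h | ⟨j, hj, hjj⟩
  · exact ⟨0, .inl rfl, by simp [h]⟩
  · refine ⟨Pi.single j (2 ^ u.1.val), .inr ⟨j, rfl⟩, funext fun i => ?_⟩
    by_cases hij : i = j
    · subst hij; simp [hjj]
    · simp [hij, hj i hij]

lemma fst_eq_add_one_or_of_bouwer_adj (h : (bouwer k m n).Adj u v) :
    v.1 = u.1 + 1 ∨ u.1 = v.1 + 1 :=
  ((fromRel_adj _ _ _).1 h).2.imp And.left And.left

lemma bouwer_adj_of_eq_add_one (hm : 1 < m) {a a' : ZMod m} {b b' : Fin (k - 1) → ZMod n}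
    (ha : a' = a + 1) (hb : b' = b ∨ ∃ j, b' = b + Pi.single j (2 ^ a.val)) :
    (bouwer k m n).Adj (a, b) (a', b') := by
  have : Fact (1 < m) := ⟨hm⟩
  refine (fromRel_adj _ _ _).2
    ⟨fun h => by simpa [ha] using congrArg Prod.fst h, .inl ⟨ha, ?_⟩⟩
  rcases hb with rfl | ⟨j, rfl⟩
  · exact .inl rfl
  · exact .inr ⟨j, fun i hi => by simp [hi], by simp⟩

lemma eq_of_bouwerRel_square (hn : 1 < n) (h2 : IsUnit (2 : ZMod n)) (hxy : x ≠ y)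
    (hxp : bouwerRel k m n x p) (hxq : bouwerRel k m n x q) (hyp : bouwerRel k m n y p)
    (hyq : bouwerRel k m n y q) : p = q := by
  have : Fact (1 < n) := ⟨hn⟩
  have hlev : y.1 = x.1 := add_right_cancel (hyp.1.symm.trans hxp.1)
  obtain ⟨d1, hd1, hp1⟩ := hxp.exists_isZeroOrSingle
  obtain ⟨d2, hd2, hp2⟩ := hyp.exists_isZeroOrSingle
  obtain ⟨d3, hd3, hq3⟩ := hyq.exists_isZeroOrSingle
  obtain ⟨d4, hd4, hq4⟩ := hxq.exists_isZeroOrSingle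
  rw [hlev] at hd2 hd3
  have hc : IsUnit ((2 : ZMod n) ^ x.1.val) := h2.pow _
  have hc2 : (2 : ZMod n) ^ x.1.val + 2 ^ x.1.val ≠ 0 := by
    rw [← two_mul]; exact (h2.mul hc).ne_zero
  have hx2 (h : x.2 = y.2) : x = y := Prod.ext hlev.symm h
  by_contra hpq
  have hpq2 (h : p.2 = q.2) : p = q := Prod.ext (hxp.1.trans hxq.1.symm) h
  refine hd1.add_ne_add hc.ne_zero hc2 hd2 hd3 hd4
    (fun h => hxy (hx2 (by linear_combination hp2 - hp1 - h)))
    (fun h => hpq (hpq2 (by linear_combination hp2 - hq3 + h)))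
    (fun h => hxy (hx2 (by linear_combination hq3 - hq4 + h)))
    (fun h => hpq (hpq2 (by linear_combination hp1 - hq4 - h)))
    (by linear_combination hp2 + hq4 - hp1 - hq3)

lemma eq_of_bouwerRel_diamond (hm : 1 < m) (hn : 3 < n) (h2 : (2 : ZMod n) ^ m = 1)
    (hxp : bouwerRel k m n x p) (hxq : bouwerRel k m n x q) (hpy : bouwerRel k m n p y)
    (hqy : bouwerRel k m n q y) : p = q := by
  have : Fact (1 < m) := ⟨hm⟩
  have : Fact (1 < n) := ⟨by omega⟩
  have hlev : q.1 = p.1 := hxq.1.trans hxp.1.symm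
  obtain ⟨d1, hd1, hp1⟩ := hxp.exists_isZeroOrSingle
  obtain ⟨d2, hd2, hy2⟩ := hpy.exists_isZeroOrSingle
  obtain ⟨d3, hd3, hy3⟩ := hqy.exists_isZeroOrSingle
  obtain ⟨d4, hd4, hq4⟩ := hxq.exists_isZeroOrSingle
  rw [hlev] at hd3
  set c := (2 : ZMod n) ^ x.1.val
  have hc' : (2 : ZMod n) ^ p.1.val = c * 2 := by
    rw [hxp.1, pow_zmod_val_add h2, ZMod.val_one, pow_one]
  rw [hc'] at hd2 hd3
  have h2u : IsUnit (2 : ZMod n) := IsUnit.of_pow_eq_one h2 (by omega)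
  have hc : IsUnit c := h2u.pow _
  have h3 : (3 : ZMod n) * c ≠ 0 := by
    rw [Ne, hc.mul_left_eq_zero]
    simpa using ZMod.natCast_ne_natCast_of_lt (n := n) (a := 3) (b := 0) hn (by omega) (by omega)
  have hd : d2 = d3 :=
    eq_of_sub_eq_sub_of_apply_eq_zero_or (hc.mul h2u).ne_zero
      (fun h => hc.ne_zero (by linear_combination h)) (fun h => h3 (by linear_combination h))
      hd2.apply_eq_zero_or hd3.apply_eq_zero_or hd4.apply_eq_zero_or hd1.apply_eq_zero_or
      (by linear_combination hy3 - hy2 + hq4 - hp1)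
  exact Prod.ext hlev.symm (by linear_combination hy3 - hy2 - hd)

lemma bouwer_commonNeighbors_subsingleton_s10 (hm : 4 < m) (hn : 3 < n)
    (h2 : (2 : ZMod n) ^ m = 1) (huw : u ≠ w) :
    ((bouwer k m n).commonNeighbors u w).Subsingleton := by
  rintro v ⟨hu, hw⟩ v' ⟨hu', hw'⟩
  by_contra hvv'
  have hm2 : (2 : ZMod m) ≠ 0 := by
    simpa using ZMod.natCast_ne_natCast_of_lt (n := m) (a := 2) (b := 0) (by omega) (by omega)
      (by omega)
  have hm4 : (4 : ZMod m) ≠ 0 := by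
    simpa using ZMod.natCast_ne_natCast_of_lt (n := m) (a := 4) (b := 0) hm (by omega)
      (by omega)
  have h2u : IsUnit (2 : ZMod n) := IsUnit.of_pow_eq_one h2 (by omega)
  -- Of the 16 orientations of the four edges, the 6 that are balanced in level form a square
  -- or a diamond; each of the other 10 forces `2 = 0` or `4 = 0` in `ZMod m`.
  rcases ((fromRel_adj _ _ _).1 hu).2 with hu | hu <;>
    rcases ((fromRel_adj _ _ _).1 hw).2 with hw | hw <;>
    rcases ((fromRel_adj _ _ _).1 hu').2 with hu' | hu' <;>
    rcases ((fromRel_adj _ _ _).1 hw').2 with hw' | hw' <;>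
    first
    | exact hvv' (eq_of_bouwerRel_square (by omega) h2u huw hu hu' hw hw')
    | exact huw (eq_of_bouwerRel_square (by omega) h2u hvv' hu hw hu' hw')
    | exact hvv' (eq_of_bouwerRel_diamond (by omega) hn h2 hu hu' hw hw')
    | exact hvv' (eq_of_bouwerRel_diamond (by omega) hn h2 hw hw' hu hu')
    | exact huw (eq_of_bouwerRel_diamond (by omega) hn h2 hu hw hu' hw')
    | exact huw (eq_of_bouwerRel_diamond (by omega) hn h2 hu' hw' hu hw)
    | grind [hu.1, hw.1, hu'.1, hw'.1]

lemma six_le_length_of_isCycle_bouwer (hm : 6 < m) (hn : 3 < n) (h2 : (2 : ZMod n) ^ m = 1)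
    {c : (bouwer k m n).Walk u u} (hc : c.IsCycle) : 6 ≤ c.length := by
  by_contra! hlt
  obtain ⟨r, hr⟩ :=
    c.even_length_of_map_zmod (fun _ _ h => fst_eq_add_one_or_of_bouwer_adj h) (by omega)
  have h4 := hc.length_ne_four fun _ _ => bouwer_commonNeighbors_subsingleton_s10 (by omega) hn h2
  have h3 := hc.three_le_length
  omega

lemma exists_isCycle_bouwer_support (hm : 2 < m) (hn : 2 < n) (j : Fin (k - 1)) :
    ∃ c : (bouwer k m n).Walk (0, 0) (0, 0), c.IsCycle ∧
      c.support = [(0, 0), (1, 0), (2, Pi.single j 2), (1, Pi.single j 2),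
        (0, Pi.single j 1), (1, Pi.single j 1), (0, 0)] := by
  have : Fact (1 < m) := ⟨by omega⟩
  have : Fact (1 < n) := ⟨by omega⟩
  have hsingle : (Pi.single j 2 : Fin (k - 1) → ZMod n) = Pi.single j 1 + Pi.single j 1 := by
    rw [← Pi.single_add, one_add_one_eq_two]
  have e1 : (bouwer k m n).Adj (0, 0) (1, 0) :=
    bouwer_adj_of_eq_add_one (by omega) (zero_add 1).symm (.inl rfl)
  have e2 : (bouwer k m n).Adj (1, 0) (2, Pi.single j 2) :=
    bouwer_adj_of_eq_add_one (by omega) one_add_one_eq_two.symm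
      (.inr ⟨j, by simp [ZMod.val_one]⟩)
  have e3 : (bouwer k m n).Adj (1, Pi.single j 2) (2, Pi.single j 2) :=
    bouwer_adj_of_eq_add_one (by omega) one_add_one_eq_two.symm (.inl rfl)
  have e4 : (bouwer k m n).Adj (0, Pi.single j 1) (1, Pi.single j 2) :=
    bouwer_adj_of_eq_add_one (by omega) (zero_add 1).symm (.inr ⟨j, by simp [hsingle]⟩)
  have e5 : (bouwer k m n).Adj (0, Pi.single j 1) (1, Pi.single j 1) :=
    bouwer_adj_of_eq_add_one (by omega) (zero_add 1).symm (.inl rfl)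
  have e6 : (bouwer k m n).Adj (0, 0) (1, Pi.single j 1) :=
    bouwer_adj_of_eq_add_one (by omega) (zero_add 1).symm (.inr ⟨j, by simp⟩)
  refine ⟨.cons e1 (.cons e2 (.cons e3.symm (.cons e4.symm (.cons e5 (.cons e6.symm .nil))))),
    ?_, rfl⟩
  have hm21 : (2 : ZMod m) ≠ 1 := by
    simpa using ZMod.natCast_ne_natCast_of_lt (n := m) (a := 2) (b := 1) hm (by omega) (by omega)
  have hn20 : (2 : ZMod n) ≠ 0 := by
    simpa using ZMod.natCast_ne_natCast_of_lt (n := n) (a := 2) (b := 0) hn (by omega) (by omega)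
  have hn21 : (2 : ZMod n) ≠ 1 := by
    simpa using ZMod.natCast_ne_natCast_of_lt (n := n) (a := 2) (b := 1) hn (by omega) (by omega)
  rw [Walk.isCycle_iff_isPath_tail_and_le_length]
  simp [Walk.isPath_def, Prod.ext_iff, hm21, hm21.symm, hn20, hn21,
    eq_comm (a := (0 : Fin (k - 1) → ZMod n))]

end Bouwer

/-- If `m > 6` and `n > 7`, then the walk
`(0,0) – (1,0) – (2,2e) – (1,2e) – (0,e) – (1,e) – (0,0)`, where `e = e_{k-1}`
is the last standard basis vector of `(ZMod n)^(k-1)`, is a 6-cycle in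
`B(k,m,n)`; consequently `B(k,m,n)` has girth `6`. -/
theorem bouwer_girth (k m n : ℕ) (hk : 1 < k) (hm : 6 < m) (hn : 7 < n)
    (h2 : (2 : ZMod n) ^ m = 1)
    (e : Fin (k - 1) → ZMod n) (he : e = fun i => if i.val = k - 2 then 1 else 0) :
    (∃ c : (bouwer k m n).Walk ((0 : ZMod m), (0 : Fin (k - 1) → ZMod n)) (0, 0),
      c.IsCycle ∧
      c.support = [(0, 0), (1, 0), (2, fun i => 2 * e i), (1, fun i => 2 * e i),
        (0, e), (1, e), (0, 0)]) ∧
    (bouwer k m n).girth = 6 := by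
  have hj : k - 2 < k - 1 := by omega
  have he1 : e = Pi.single ⟨k - 2, hj⟩ 1 := by
    subst he; funext i; simp [Pi.single_apply, Fin.ext_iff]
  have he2 : (fun i => 2 * e i) = Pi.single ⟨k - 2, hj⟩ 2 := by
    rw [he1]; funext i; simp [Pi.single_apply]
  obtain ⟨c, hc, hsupp⟩ :=
    exists_isCycle_bouwer_support (k := k) (m := m) (n := n) (by omega) (by omega) ⟨k - 2, hj⟩
  refine ⟨⟨c, hc, by rw [hsupp, he2, he1]⟩, ?_⟩
  have hlen : c.length = 6 := by simpa using congrArg List.length hsupp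
  have hegirth : (bouwer k m n).egirth = 6 := by
    refine le_antisymm (by simpa [hlen] using egirth_le_length hc) (le_egirth.2 fun _ _ hw => ?_)
    exact_mod_cast six_le_length_of_isCycle_bouwer hm (by omega) h2 hw
  rw [girth, hegirth]
  rfl
end

section
/- If m > 6 and n > 7, then no automorphism of the Bouwer graph B(k,m,n) interchanges the vertices (0,0) and (1,0); in particular B(k,m,n) is not arc-transitive. -/
namespace BouwerPf

variable {k m n : ℕ}

lemma n_odd (hn : 7 < n) (hmm : 0 < m) (h2 : (2 : ZMod n) ^ m = 1) : ¬ (2 ∣ n) := by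
  intro hd
  have h := congrArg (ZMod.castHom hd (ZMod 2)) h2
  rw [map_pow, map_one] at h
  have h20 : (ZMod.castHom hd (ZMod 2)) (2 : ZMod n) = 0 := by
    have : (2 : ZMod n) = 1 + 1 := by norm_num
    rw [this, map_add, map_one]; decide
  rw [h20, zero_pow (by omega : m ≠ 0)] at h
  exact absurd h (by decide)

lemma n_ge9 (hn : 7 < n) (hmm : 0 < m) (h2 : (2 : ZMod n) ^ m = 1) : 9 ≤ n := by
  have := n_odd hn hmm h2
  omega

/-- kill small integers that vanish in `ZMod n` -/
lemma killn (hn : 7 < n) (hmm : 0 < m) (h2 : (2 : ZMod n) ^ m = 1)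
    {A : ℤ} (h : (A : ZMod n) = 0) (hb : |A| ≤ 8) : A = 0 := by
  haveI : NeZero n := ⟨by omega⟩
  rw [ZMod.intCast_zmod_eq_zero_iff_dvd] at h
  have h9 := n_ge9 hn hmm h2
  exact Int.eq_zero_of_abs_lt_dvd h (by omega)

lemma killn2 (hn : 7 < n) (hmm : 0 < m) (h2 : (2 : ZMod n) ^ m = 1)
    {A : ℤ} (h : (A : ZMod n) = 0) (he : 2 ∣ A) (hb : |A| ≤ 16) : A = 0 := by
  haveI : NeZero n := ⟨by omega⟩
  rw [ZMod.intCast_zmod_eq_zero_iff_dvd] at h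
  have h9 := n_ge9 hn hmm h2
  have hodd := n_odd hn hmm h2
  obtain ⟨c, rfl⟩ := h
  obtain ⟨d, hd⟩ := he
  have h2c : (2:ℤ) ∣ c := by
    rcases (Int.prime_two.dvd_mul.mp ⟨d, hd⟩) with h' | h'
    · exfalso; exact hodd (by exact_mod_cast h')
    · exact h'
  obtain ⟨e, rfl⟩ := h2c
  have hb' : (n:ℤ) * (2 * |e|) ≤ 16 := by
    calc (n:ℤ) * (2 * |e|) = |(n:ℤ) * (2 * e)| := by
          rw [abs_mul, abs_mul]; simp [abs_of_nonneg]
    _ ≤ 16 := hb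
  have : e = 0 := by nlinarith [abs_nonneg e, le_abs_self e, neg_abs_le e]
  simp [this]

lemma killm (hm : 6 < m) {A : ℤ} (h : (A : ZMod m) = 0) (hb : |A| ≤ 6) : A = 0 := by
  haveI : NeZero m := ⟨by omega⟩
  rw [ZMod.intCast_zmod_eq_zero_iff_dvd] at h
  exact Int.eq_zero_of_abs_lt_dvd h (by omega)


section fpow
/-- `f a = 2 ^ a.val` in `ZMod n`, for `a : ZMod m`. -/
def f (n : ℕ) (a : ZMod m) : ZMod n := 2 ^ a.val

lemma pow2_mod (hm : 6 < m) (h2 : (2 : ZMod n) ^ m = 1) (x : ℕ) :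
    (2 : ZMod n) ^ (x % m) = 2 ^ x := by
  conv_rhs => rw [← Nat.div_add_mod x m]
  rw [pow_add, pow_mul, h2, one_pow, one_mul]

lemma f_succ (hm : 6 < m) (h2 : (2 : ZMod n) ^ m = 1) (a : ZMod m) :
    f n (a + 1) = 2 * f n a := by
  haveI : NeZero m := ⟨by omega⟩
  haveI : Fact (1 < m) := ⟨by omega⟩
  rw [f, f, ZMod.val_add, ZMod.val_one, pow2_mod hm h2, pow_succ]
  ring

lemma f_zero (hm : 6 < m) : f n (0 : ZMod m) = 1 := by
  haveI : NeZero m := ⟨by omega⟩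
  rw [f, ZMod.val_zero, pow_zero]

lemma f_ne_zero (hm : 6 < m) (h2 : (2 : ZMod n) ^ m = 1) (hn : 7 < n) (a : ZMod m) :
    f n a ≠ 0 := by
  haveI : NeZero m := ⟨by omega⟩
  haveI : Fact (1 < n) := ⟨by omega⟩
  intro h0
  have hv : a.val < m := ZMod.val_lt a
  have : (2:ZMod n) ^ m = 2 ^ a.val * 2 ^ (m - a.val) := by
    rw [← pow_add]; congr 1; omega
  rw [h2] at this
  rw [f] at h0; rw [h0, zero_mul] at this
  exact one_ne_zero this

end fpow

section graph
variable (hk : 1 < k) (hm : 6 < m) (hn : 7 < n) (h2 : (2 : ZMod n) ^ m = 1)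

/-- characteristic-type vector: value `c` at coordinate `j`, `0` elsewhere. -/
def ev (n : ℕ) (j : Fin (k-1)) (c : ZMod n) : Fin (k-1) → ZMod n :=
  fun i => if i = j then c else 0

lemma ev_self (n : ℕ) (j : Fin (k-1)) (c : ZMod n) : ev n j c j = c := if_pos rfl

lemma ev_other {j : Fin (k-1)} {i : Fin (k-1)} (h : i ≠ j) (c : ZMod n) : ev n j c i = 0 :=
  if_neg h

lemma adj_iff {x y : ZMod m × (Fin (k-1) → ZMod n)} :
    (bouwer k m n).Adj x y ↔ x ≠ y ∧ (bouwerRel k m n x y ∨ bouwerRel k m n y x) := by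
  rw [bouwer]; exact SimpleGraph.fromRel_adj _ _ _

lemma adj_or {x y : ZMod m × (Fin (k-1) → ZMod n)} (h : (bouwer k m n).Adj x y) :
    bouwerRel k m n x y ∨ bouwerRel k m n y x := (adj_iff.mp h).2

/-- extraction of the structure of a Bouwer step. -/
lemma rel_facts {x y : ZMod m × (Fin (k-1) → ZMod n)} (h : bouwerRel k m n x y) :
    y.1 = x.1 + 1 ∧
    (∀ i, ∃ A : ℤ, (A = 0 ∨ A = 1) ∧ y.2 i = x.2 i + (A : ZMod n) * f n x.1) ∧
    (∀ i i', y.2 i ≠ x.2 i → y.2 i' ≠ x.2 i' → i = i') := by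
  obtain ⟨h1, h2'⟩ := h
  refine ⟨h1, ?_, ?_⟩
  · intro i
    rcases h2' with he | ⟨j, hoth, hj⟩
    · exact ⟨0, Or.inl rfl, by rw [congrFun he i]; push_cast; ring⟩
    · by_cases hij : i = j
      · subst hij
        exact ⟨1, Or.inr rfl, by rw [hj]; show _ = _ + _ * f n x.1; push_cast; rw [f]; ring⟩
      · exact ⟨0, Or.inl rfl, by rw [hoth i hij]; push_cast; ring⟩
  · intro i i' hi hi'
    rcases h2' with he | ⟨j, hoth, hj⟩
    · exact absurd (congrFun he i) hi
    · have : i = j := by by_contra hij; exact hi (hoth i hij)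
      have : i' = j := by by_contra hij; exact hi' (hoth i' hij)
      omega

lemma mkAdj (hm : 6 < m) (a a' : ZMod m) (b c : Fin (k-1) → ZMod n) (ha : a' = a + 1) (j : Fin (k-1))
    (hj : c j = b j + f n a) (hoth : ∀ i, i ≠ j → c i = b i) :
    (bouwer k m n).Adj (a, b) (a', c) := by
  haveI : Fact (1 < m) := ⟨by omega⟩
  rw [adj_iff]
  constructor
  · intro hee
    have : a = a' := congrArg Prod.fst hee
    rw [ha] at this
    exact one_ne_zero (by linear_combination -this : (1 : ZMod m) = 0)
  · exact Or.inl ⟨ha, Or.inr ⟨j, hoth, hj⟩⟩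

lemma mkAdjStr (hm : 6 < m) (a a' : ZMod m) (b : Fin (k-1) → ZMod n) (ha : a' = a + 1) :
    (bouwer k m n).Adj (a, b) (a', b) := by
  haveI : Fact (1 < m) := ⟨by omega⟩
  rw [adj_iff]
  constructor
  · intro hee
    have : a = a' := congrArg Prod.fst hee
    rw [ha] at this
    exact one_ne_zero (by linear_combination -this : (1 : ZMod m) = 0)
  · exact Or.inl ⟨ha, Or.inl rfl⟩

lemma patt20 (hm : 6 < m)
    {z p q r y : ZMod m × (Fin (k-1) → ZMod n)}
    (hz : z.1 = ((2 : ℤ) : ZMod m)) (hy : y.1 = ((0 : ℤ) : ZMod m))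
    (h1 : (bouwer k m n).Adj z p) (h2 : (bouwer k m n).Adj p q)
    (h3 : (bouwer k m n).Adj q r) (h4 : (bouwer k m n).Adj r y) :
    (bouwerRel k m n z p ∧ bouwerRel k m n q p ∧ bouwerRel k m n r q ∧ bouwerRel k m n y r ∧ p.1 = ((3 : ℤ) : ZMod m) ∧ q.1 = ((2 : ℤ) : ZMod m) ∧ r.1 = ((1 : ℤ) : ZMod m)) ∨
    (bouwerRel k m n p z ∧ bouwerRel k m n p q ∧ bouwerRel k m n r q ∧ bouwerRel k m n y r ∧ p.1 = ((1 : ℤ) : ZMod m) ∧ q.1 = ((2 : ℤ) : ZMod m) ∧ r.1 = ((1 : ℤ) : ZMod m)) ∨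
    (bouwerRel k m n p z ∧ bouwerRel k m n q p ∧ bouwerRel k m n q r ∧ bouwerRel k m n y r ∧ p.1 = ((1 : ℤ) : ZMod m) ∧ q.1 = ((0 : ℤ) : ZMod m) ∧ r.1 = ((1 : ℤ) : ZMod m)) ∨
    (bouwerRel k m n p z ∧ bouwerRel k m n q p ∧ bouwerRel k m n r q ∧ bouwerRel k m n r y ∧ p.1 = ((1 : ℤ) : ZMod m) ∧ q.1 = ((0 : ℤ) : ZMod m) ∧ r.1 = ((-1 : ℤ) : ZMod m)) := by
  rcases adj_or h1 with R1 | R1 <;> have L1 := (rel_facts R1).1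
  · rcases adj_or h2 with R2 | R2 <;> have L2 := (rel_facts R2).1
    · rcases adj_or h3 with R3 | R3 <;> have L3 := (rel_facts R3).1
      · rcases adj_or h4 with R4 | R4 <;> have L4 := (rel_facts R4).1
        · exfalso
          have hC : ((6 : ℤ) : ZMod m) = 0 := by
            push_cast; push_cast at hz hy; linear_combination - L1 - L2 - L3 - L4 - hz + hy
          have := killm hm hC (by norm_num); norm_num at this
        · exfalso
          have hC : ((4 : ℤ) : ZMod m) = 0 := by
            push_cast; push_cast at hz hy; linear_combination - L1 - L2 - L3 + L4 - hz + hy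
          have := killm hm hC (by norm_num); norm_num at this
      · rcases adj_or h4 with R4 | R4 <;> have L4 := (rel_facts R4).1
        · exfalso
          have hC : ((4 : ℤ) : ZMod m) = 0 := by
            push_cast; push_cast at hz hy; linear_combination - L1 - L2 + L3 - L4 - hz + hy
          have := killm hm hC (by norm_num); norm_num at this
        · exfalso
          have hC : ((2 : ℤ) : ZMod m) = 0 := by
            push_cast; push_cast at hz hy; linear_combination - L1 - L2 + L3 + L4 - hz + hy
          have := killm hm hC (by norm_num); norm_num at this
    · rcases adj_or h3 with R3 | R3 <;> have L3 := (rel_facts R3).1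
      · rcases adj_or h4 with R4 | R4 <;> have L4 := (rel_facts R4).1
        · exfalso
          have hC : ((4 : ℤ) : ZMod m) = 0 := by
            push_cast; push_cast at hz hy; linear_combination - L1 + L2 - L3 - L4 - hz + hy
          have := killm hm hC (by norm_num); norm_num at this
        · exfalso
          have hC : ((2 : ℤ) : ZMod m) = 0 := by
            push_cast; push_cast at hz hy; linear_combination - L1 + L2 - L3 + L4 - hz + hy
          have := killm hm hC (by norm_num); norm_num at this
      · rcases adj_or h4 with R4 | R4 <;> have L4 := (rel_facts R4).1
        · exfalso
          have hC : ((2 : ℤ) : ZMod m) = 0 := by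
            push_cast; push_cast at hz hy; linear_combination - L1 + L2 + L3 - L4 - hz + hy
          have := killm hm hC (by norm_num); norm_num at this
        · refine Or.inl ⟨R1, R2, R3, R4, ?_, ?_, ?_⟩
          · push_cast; push_cast at hz; linear_combination hz + L1
          · push_cast; push_cast at hz; linear_combination hz + L1 - L2
          · push_cast; push_cast at hz; linear_combination hz + L1 - L2 - L3
  · rcases adj_or h2 with R2 | R2 <;> have L2 := (rel_facts R2).1
    · rcases adj_or h3 with R3 | R3 <;> have L3 := (rel_facts R3).1
      · rcases adj_or h4 with R4 | R4 <;> have L4 := (rel_facts R4).1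
        · exfalso
          have hC : ((4 : ℤ) : ZMod m) = 0 := by
            push_cast; push_cast at hz hy; linear_combination L1 - L2 - L3 - L4 - hz + hy
          have := killm hm hC (by norm_num); norm_num at this
        · exfalso
          have hC : ((2 : ℤ) : ZMod m) = 0 := by
            push_cast; push_cast at hz hy; linear_combination L1 - L2 - L3 + L4 - hz + hy
          have := killm hm hC (by norm_num); norm_num at this
      · rcases adj_or h4 with R4 | R4 <;> have L4 := (rel_facts R4).1
        · exfalso
          have hC : ((2 : ℤ) : ZMod m) = 0 := by
            push_cast; push_cast at hz hy; linear_combination L1 - L2 + L3 - L4 - hz + hy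
          have := killm hm hC (by norm_num); norm_num at this
        · refine Or.inr (Or.inl ⟨R1, R2, R3, R4, ?_, ?_, ?_⟩)
          · push_cast; push_cast at hz; linear_combination hz - L1
          · push_cast; push_cast at hz; linear_combination hz - L1 + L2
          · push_cast; push_cast at hz; linear_combination hz - L1 + L2 - L3
    · rcases adj_or h3 with R3 | R3 <;> have L3 := (rel_facts R3).1
      · rcases adj_or h4 with R4 | R4 <;> have L4 := (rel_facts R4).1
        · exfalso
          have hC : ((2 : ℤ) : ZMod m) = 0 := by
            push_cast; push_cast at hz hy; linear_combination L1 + L2 - L3 - L4 - hz + hy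
          have := killm hm hC (by norm_num); norm_num at this
        · refine Or.inr (Or.inr (Or.inl ⟨R1, R2, R3, R4, ?_, ?_, ?_⟩))
          · push_cast; push_cast at hz; linear_combination hz - L1
          · push_cast; push_cast at hz; linear_combination hz - L1 - L2
          · push_cast; push_cast at hz; linear_combination hz - L1 - L2 + L3
      · rcases adj_or h4 with R4 | R4 <;> have L4 := (rel_facts R4).1
        · refine Or.inr (Or.inr (Or.inr (⟨R1, R2, R3, R4, ?_, ?_, ?_⟩)))
          · push_cast; push_cast at hz; linear_combination hz - L1
          · push_cast; push_cast at hz; linear_combination hz - L1 - L2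
          · push_cast; push_cast at hz; linear_combination hz - L1 - L2 - L3
        · exfalso
          have hC : ((-2 : ℤ) : ZMod m) = 0 := by
            push_cast; push_cast at hz hy; linear_combination L1 + L2 + L3 + L4 - hz + hy
          have := killm hm hC (by norm_num); norm_num at this

lemma pattm1 (hm : 6 < m)
    {z p q r y : ZMod m × (Fin (k-1) → ZMod n)}
    (hz : z.1 = ((-1 : ℤ) : ZMod m)) (hy : y.1 = ((1 : ℤ) : ZMod m))
    (h1 : (bouwer k m n).Adj z p) (h2 : (bouwer k m n).Adj p q)
    (h3 : (bouwer k m n).Adj q r) (h4 : (bouwer k m n).Adj r y) :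
    (bouwerRel k m n z p ∧ bouwerRel k m n p q ∧ bouwerRel k m n q r ∧ bouwerRel k m n y r ∧ p.1 = ((0 : ℤ) : ZMod m) ∧ q.1 = ((1 : ℤ) : ZMod m) ∧ r.1 = ((2 : ℤ) : ZMod m)) ∨
    (bouwerRel k m n z p ∧ bouwerRel k m n p q ∧ bouwerRel k m n r q ∧ bouwerRel k m n r y ∧ p.1 = ((0 : ℤ) : ZMod m) ∧ q.1 = ((1 : ℤ) : ZMod m) ∧ r.1 = ((0 : ℤ) : ZMod m)) ∨
    (bouwerRel k m n z p ∧ bouwerRel k m n q p ∧ bouwerRel k m n q r ∧ bouwerRel k m n r y ∧ p.1 = ((0 : ℤ) : ZMod m) ∧ q.1 = ((-1 : ℤ) : ZMod m) ∧ r.1 = ((0 : ℤ) : ZMod m)) ∨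
    (bouwerRel k m n p z ∧ bouwerRel k m n p q ∧ bouwerRel k m n q r ∧ bouwerRel k m n r y ∧ p.1 = ((-2 : ℤ) : ZMod m) ∧ q.1 = ((-1 : ℤ) : ZMod m) ∧ r.1 = ((0 : ℤ) : ZMod m)) := by
  rcases adj_or h1 with R1 | R1 <;> have L1 := (rel_facts R1).1
  · rcases adj_or h2 with R2 | R2 <;> have L2 := (rel_facts R2).1
    · rcases adj_or h3 with R3 | R3 <;> have L3 := (rel_facts R3).1
      · rcases adj_or h4 with R4 | R4 <;> have L4 := (rel_facts R4).1
        · exfalso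
          have hC : ((2 : ℤ) : ZMod m) = 0 := by
            push_cast; push_cast at hz hy; linear_combination - L1 - L2 - L3 - L4 - hz + hy
          have := killm hm hC (by norm_num); norm_num at this
        · refine Or.inl ⟨R1, R2, R3, R4, ?_, ?_, ?_⟩
          · push_cast; push_cast at hz; linear_combination hz + L1
          · push_cast; push_cast at hz; linear_combination hz + L1 + L2
          · push_cast; push_cast at hz; linear_combination hz + L1 + L2 + L3
      · rcases adj_or h4 with R4 | R4 <;> have L4 := (rel_facts R4).1
        · refine Or.inr (Or.inl ⟨R1, R2, R3, R4, ?_, ?_, ?_⟩)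
          · push_cast; push_cast at hz; linear_combination hz + L1
          · push_cast; push_cast at hz; linear_combination hz + L1 + L2
          · push_cast; push_cast at hz; linear_combination hz + L1 + L2 - L3
        · exfalso
          have hC : ((-2 : ℤ) : ZMod m) = 0 := by
            push_cast; push_cast at hz hy; linear_combination - L1 - L2 + L3 + L4 - hz + hy
          have := killm hm hC (by norm_num); norm_num at this
    · rcases adj_or h3 with R3 | R3 <;> have L3 := (rel_facts R3).1
      · rcases adj_or h4 with R4 | R4 <;> have L4 := (rel_facts R4).1
        · refine Or.inr (Or.inr (Or.inl ⟨R1, R2, R3, R4, ?_, ?_, ?_⟩))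
          · push_cast; push_cast at hz; linear_combination hz + L1
          · push_cast; push_cast at hz; linear_combination hz + L1 - L2
          · push_cast; push_cast at hz; linear_combination hz + L1 - L2 + L3
        · exfalso
          have hC : ((-2 : ℤ) : ZMod m) = 0 := by
            push_cast; push_cast at hz hy; linear_combination - L1 + L2 - L3 + L4 - hz + hy
          have := killm hm hC (by norm_num); norm_num at this
      · rcases adj_or h4 with R4 | R4 <;> have L4 := (rel_facts R4).1
        · exfalso
          have hC : ((-2 : ℤ) : ZMod m) = 0 := by
            push_cast; push_cast at hz hy; linear_combination - L1 + L2 + L3 - L4 - hz + hy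
          have := killm hm hC (by norm_num); norm_num at this
        · exfalso
          have hC : ((-4 : ℤ) : ZMod m) = 0 := by
            push_cast; push_cast at hz hy; linear_combination - L1 + L2 + L3 + L4 - hz + hy
          have := killm hm hC (by norm_num); norm_num at this
  · rcases adj_or h2 with R2 | R2 <;> have L2 := (rel_facts R2).1
    · rcases adj_or h3 with R3 | R3 <;> have L3 := (rel_facts R3).1
      · rcases adj_or h4 with R4 | R4 <;> have L4 := (rel_facts R4).1
        · refine Or.inr (Or.inr (Or.inr (⟨R1, R2, R3, R4, ?_, ?_, ?_⟩)))
          · push_cast; push_cast at hz; linear_combination hz - L1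
          · push_cast; push_cast at hz; linear_combination hz - L1 + L2
          · push_cast; push_cast at hz; linear_combination hz - L1 + L2 + L3
        · exfalso
          have hC : ((-2 : ℤ) : ZMod m) = 0 := by
            push_cast; push_cast at hz hy; linear_combination L1 - L2 - L3 + L4 - hz + hy
          have := killm hm hC (by norm_num); norm_num at this
      · rcases adj_or h4 with R4 | R4 <;> have L4 := (rel_facts R4).1
        · exfalso
          have hC : ((-2 : ℤ) : ZMod m) = 0 := by
            push_cast; push_cast at hz hy; linear_combination L1 - L2 + L3 - L4 - hz + hy
          have := killm hm hC (by norm_num); norm_num at this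
        · exfalso
          have hC : ((-4 : ℤ) : ZMod m) = 0 := by
            push_cast; push_cast at hz hy; linear_combination L1 - L2 + L3 + L4 - hz + hy
          have := killm hm hC (by norm_num); norm_num at this
    · rcases adj_or h3 with R3 | R3 <;> have L3 := (rel_facts R3).1
      · rcases adj_or h4 with R4 | R4 <;> have L4 := (rel_facts R4).1
        · exfalso
          have hC : ((-2 : ℤ) : ZMod m) = 0 := by
            push_cast; push_cast at hz hy; linear_combination L1 + L2 - L3 - L4 - hz + hy
          have := killm hm hC (by norm_num); norm_num at this
        · exfalso
          have hC : ((-4 : ℤ) : ZMod m) = 0 := by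
            push_cast; push_cast at hz hy; linear_combination L1 + L2 - L3 + L4 - hz + hy
          have := killm hm hC (by norm_num); norm_num at this
      · rcases adj_or h4 with R4 | R4 <;> have L4 := (rel_facts R4).1
        · exfalso
          have hC : ((-4 : ℤ) : ZMod m) = 0 := by
            push_cast; push_cast at hz hy; linear_combination L1 + L2 + L3 - L4 - hz + hy
          have := killm hm hC (by norm_num); norm_num at this
        · exfalso
          have hC : ((-6 : ℤ) : ZMod m) = 0 := by
            push_cast; push_cast at hz hy; linear_combination L1 + L2 + L3 + L4 - hz + hy
          have := killm hm hC (by norm_num); norm_num at this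


section fvals
variable (hm : 6 < m) (h2 : (2 : ZMod n) ^ m = 1)

lemma hf1 (hm : 6 < m) (h2 : (2 : ZMod n) ^ m = 1) : f n (1 : ZMod m) = 2 := by
  have := f_succ hm h2 0
  rw [zero_add] at this
  rw [this, f_zero hm]; ring

lemma hf2 (hm : 6 < m) (h2 : (2 : ZMod n) ^ m = 1) : f n (2 : ZMod m) = 4 := by
  have := f_succ hm h2 1
  rw [one_add_one_eq_two] at this
  rw [this, hf1 hm h2]; ring

lemma hf3 (hm : 6 < m) (h2 : (2 : ZMod n) ^ m = 1) : f n (3 : ZMod m) = 8 := by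
  have := f_succ hm h2 2
  rw [(by ring : (2 : ZMod m) + 1 = 3)] at this
  rw [this, hf2 hm h2]; ring

lemma hfm1 (hm : 6 < m) (h2 : (2 : ZMod n) ^ m = 1) : 2 * f n (-1 : ZMod m) = 1 := by
  have := f_succ hm h2 (-1)
  rw [neg_add_cancel] at this
  rw [← this, f_zero hm]

lemma hfm2 (hm : 6 < m) (h2 : (2 : ZMod n) ^ m = 1) :
    2 * f n (-2 : ZMod m) = f n (-1 : ZMod m) := by
  have := f_succ hm h2 (-2)
  rw [(by ring : (-2 : ZMod m) + 1 = -1)] at this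
  rw [this]

end fvals

section classif
set_option maxHeartbeats 1000000

lemma F2lem (hm : 6 < m) (hn : 7 < n) (h2 : (2 : ZMod n) ^ m = 1)
    {p q r : ZMod m × (Fin (k-1) → ZMod n)}
    (h1 : (bouwer k m n).Adj ((2 : ZMod m), (0 : Fin (k-1) → ZMod n)) p)
    (h2' : (bouwer k m n).Adj p q) (h3 : (bouwer k m n).Adj q r)
    (h4 : (bouwer k m n).Adj r ((0 : ZMod m), (0 : Fin (k-1) → ZMod n)))
    (hpv : p ≠ ((1 : ZMod m), (0 : Fin (k-1) → ZMod n)))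
    (hqz : q ≠ ((2 : ZMod m), (0 : Fin (k-1) → ZMod n)))
    (hrv : r ≠ ((1 : ZMod m), (0 : Fin (k-1) → ZMod n))) : False := by
  have hmm : 0 < m := by omega
  have hz : ((2 : ZMod m), (0 : Fin (k-1) → ZMod n)).1 = (((2:ℤ)) : ZMod m) := by push_cast; rfl
  have hy : ((0 : ZMod m), (0 : Fin (k-1) → ZMod n)).1 = (((0:ℤ)) : ZMod m) := by push_cast; rfl
  rcases patt20 hm hz hy h1 h2' h3 h4 with
    ⟨S1,S2,S3,S4,hp1,hq1,hr1⟩ | ⟨S1,S2,S3,S4,hp1,hq1,hr1⟩ |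
    ⟨S1,S2,S3,S4,hp1,hq1,hr1⟩ | ⟨S1,S2,S3,S4,hp1,hq1,hr1⟩
  all_goals push_cast at hp1 hq1 hr1
  · -- pattern (3,2,1): S1 : Rel z p, S2 : Rel q p, S3 : Rel r q, S4 : Rel y r; q = z
    apply hqz
    refine Prod.ext hq1 (funext fun i => ?_)
    obtain ⟨A, hA, hAe⟩ := (rel_facts S1).2.1 i
    obtain ⟨B, hB, hBe⟩ := (rel_facts S2).2.1 i
    obtain ⟨C, hC, hCe⟩ := (rel_facts S3).2.1 i
    obtain ⟨D, hD, hDe⟩ := (rel_facts S4).2.1 i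
    simp only [Pi.zero_apply] at hAe hBe hCe hDe ⊢
    rw [hf2 hm h2] at hAe   -- z.1 = 2 (defeq)
    rw [hq1, hf2 hm h2] at hBe
    rw [hr1, hf1 hm h2] at hCe
    rw [f_zero hm] at hDe   -- y.1 = 0 defeq
    have hZ : ((4*A - 4*B - 2*C - D : ℤ) : ZMod n) = 0 := by
      push_cast
      linear_combination -hAe + hBe + hCe + hDe
    have hint := killn hn hmm h2 hZ (by rw [abs_le]; omega)
    -- conclude q.2 i = 0
    have hA' : A = B ∧ C = 0 ∧ D = 0 := by omega
    obtain ⟨hAB, hC0, hD0⟩ := hA'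
    rw [hAB] at hAe
    linear_combination hAe - hBe
  · -- pattern (1,2,1): S1 : Rel p z, S2 : Rel p q, S3 : Rel r q, S4 : Rel y r; r = v
    apply hrv
    refine Prod.ext hr1 (funext fun i => ?_)
    obtain ⟨A, hA, hAe⟩ := (rel_facts S1).2.1 i
    obtain ⟨B, hB, hBe⟩ := (rel_facts S2).2.1 i
    obtain ⟨C, hC, hCe⟩ := (rel_facts S3).2.1 i
    obtain ⟨D, hD, hDe⟩ := (rel_facts S4).2.1 i
    simp only [Pi.zero_apply] at hAe hBe hCe hDe ⊢
    rw [hp1, hf1 hm h2] at hAe hBe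
    rw [hr1, hf1 hm h2] at hCe
    rw [f_zero hm] at hDe
    have hZ : ((-2*A + 2*B - 2*C - D : ℤ) : ZMod n) = 0 := by
      push_cast
      linear_combination hAe - hBe + hCe + hDe
    have hint := killn hn hmm h2 hZ (by rw [abs_le]; omega)
    have hD0 : D = 0 := by omega
    rw [hD0] at hDe
    push_cast at hDe
    linear_combination hDe
  · -- pattern (1,0,1): S1 : Rel p z, S2 : Rel q p, S3 : Rel q r, S4 : Rel y r; p = v
    apply hpv
    refine Prod.ext hp1 (funext fun i => ?_)
    obtain ⟨A, hA, hAe⟩ := (rel_facts S1).2.1 i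
    obtain ⟨B, hB, hBe⟩ := (rel_facts S2).2.1 i
    obtain ⟨C, hC, hCe⟩ := (rel_facts S3).2.1 i
    obtain ⟨D, hD, hDe⟩ := (rel_facts S4).2.1 i
    simp only [Pi.zero_apply] at hAe hBe hCe hDe ⊢
    rw [hp1, hf1 hm h2] at hAe
    rw [hq1, f_zero hm] at hBe hCe
    rw [f_zero hm] at hDe
    have hZ : ((-2*A - B + C - D : ℤ) : ZMod n) = 0 := by
      push_cast
      linear_combination hAe + hBe - hCe + hDe
    have hint := killn hn hmm h2 hZ (by rw [abs_le]; omega)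
    have hA0 : A = 0 := by omega
    rw [hA0] at hAe
    push_cast at hAe
    linear_combination -hAe
  · -- pattern (1,0,-1): S1 : Rel p z, S2 : Rel q p, S3 : Rel r q, S4 : Rel r y; p = v
    apply hpv
    refine Prod.ext hp1 (funext fun i => ?_)
    obtain ⟨A, hA, hAe⟩ := (rel_facts S1).2.1 i
    obtain ⟨B, hB, hBe⟩ := (rel_facts S2).2.1 i
    obtain ⟨C, hC, hCe⟩ := (rel_facts S3).2.1 i
    obtain ⟨D, hD, hDe⟩ := (rel_facts S4).2.1 i
    simp only [Pi.zero_apply] at hAe hBe hCe hDe ⊢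
    rw [hp1, hf1 hm h2] at hAe
    rw [hq1, f_zero hm] at hBe
    rw [hr1] at hCe hDe
    have hZ : ((-4*A - 2*B - C + D : ℤ) : ZMod n) = 0 := by
      push_cast
      linear_combination 2*hAe + 2*hBe + 2*hCe - 2*hDe
        + ((C : ZMod n) - (D : ZMod n)) * (hfm1 hm h2)
    have hint := killn hn hmm h2 hZ (by rw [abs_le]; omega)
    have hA0 : A = 0 := by omega
    rw [hA0] at hAe
    push_cast at hAe
    linear_combination -hAe


lemma F3lem (hm : 6 < m) (hn : 7 < n) (h2 : (2 : ZMod n) ^ m = 1) (j0 : Fin (k-1))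
    {p q r : ZMod m × (Fin (k-1) → ZMod n)}
    (h1 : (bouwer k m n).Adj ((2 : ZMod m), ev n j0 2) p)
    (h2' : (bouwer k m n).Adj p q) (h3 : (bouwer k m n).Adj q r)
    (h4 : (bouwer k m n).Adj r ((0 : ZMod m), (0 : Fin (k-1) → ZMod n)))
    (hpv : p ≠ ((1 : ZMod m), (0 : Fin (k-1) → ZMod n)))
    (hqz : q ≠ ((2 : ZMod m), ev n j0 2))
    (hrv : r ≠ ((1 : ZMod m), (0 : Fin (k-1) → ZMod n))) :
    p = ((1 : ZMod m), ev n j0 2) := by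
  have hmm : 0 < m := by omega
  have hz : ((2 : ZMod m), ev n j0 2).1 = (((2:ℤ)) : ZMod m) := by push_cast; rfl
  have hy : ((0 : ZMod m), (0 : Fin (k-1) → ZMod n)).1 = (((0:ℤ)) : ZMod m) := by push_cast; rfl
  rcases patt20 hm hz hy h1 h2' h3 h4 with
    ⟨S1,S2,S3,S4,hp1,hq1,hr1⟩ | ⟨S1,S2,S3,S4,hp1,hq1,hr1⟩ |
    ⟨S1,S2,S3,S4,hp1,hq1,hr1⟩ | ⟨S1,S2,S3,S4,hp1,hq1,hr1⟩
  all_goals push_cast at hp1 hq1 hr1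
  · -- (3,2,1): q = z, contradiction
    exfalso; apply hqz
    refine Prod.ext hq1 (funext fun i => ?_)
    obtain ⟨A, hA, hAe⟩ := (rel_facts S1).2.1 i
    obtain ⟨B, hB, hBe⟩ := (rel_facts S2).2.1 i
    obtain ⟨C, hC, hCe⟩ := (rel_facts S3).2.1 i
    obtain ⟨D, hD, hDe⟩ := (rel_facts S4).2.1 i
    simp only [Pi.zero_apply] at hAe hBe hCe hDe ⊢
    rw [hf2 hm h2] at hAe
    rw [hq1, hf2 hm h2] at hBe
    rw [hr1, hf1 hm h2] at hCe
    rw [f_zero hm] at hDe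
    by_cases hij : i = j0
    · subst hij
      rw [ev_self] at hAe ⊢
      have hZ : ((2 + 4*A - 4*B - 2*C - D : ℤ) : ZMod n) = 0 := by
        push_cast; linear_combination -hAe + hBe + hCe + hDe
      have hint := killn hn hmm h2 hZ (by rw [abs_le]; omega)
      have : A = B := by omega
      rw [this] at hAe
      linear_combination hAe - hBe
    · rw [ev_other hij] at hAe ⊢
      have hZ : ((4*A - 4*B - 2*C - D : ℤ) : ZMod n) = 0 := by
        push_cast; linear_combination -hAe + hBe + hCe + hDe
      have hint := killn hn hmm h2 hZ (by rw [abs_le]; omega)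
      have : A = B := by omega
      rw [this] at hAe
      linear_combination hAe - hBe
  · -- (1,2,1): r = v, contradiction
    exfalso; apply hrv
    refine Prod.ext hr1 (funext fun i => ?_)
    obtain ⟨A, hA, hAe⟩ := (rel_facts S1).2.1 i
    obtain ⟨B, hB, hBe⟩ := (rel_facts S2).2.1 i
    obtain ⟨C, hC, hCe⟩ := (rel_facts S3).2.1 i
    obtain ⟨D, hD, hDe⟩ := (rel_facts S4).2.1 i
    simp only [Pi.zero_apply] at hAe hBe hCe hDe ⊢
    rw [hp1, hf1 hm h2] at hAe hBe
    rw [hr1, hf1 hm h2] at hCe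
    rw [f_zero hm] at hDe
    by_cases hij : i = j0
    · subst hij
      rw [ev_self] at hAe
      have hZ : ((2 - 2*A + 2*B - 2*C - D : ℤ) : ZMod n) = 0 := by
        push_cast; linear_combination hAe - hBe + hCe + hDe
      have hint := killn hn hmm h2 hZ (by rw [abs_le]; omega)
      have hD0 : D = 0 := by omega
      rw [hD0] at hDe; push_cast at hDe
      linear_combination hDe
    · rw [ev_other hij] at hAe
      have hZ : ((-2*A + 2*B - 2*C - D : ℤ) : ZMod n) = 0 := by
        push_cast; linear_combination hAe - hBe + hCe + hDe
      have hint := killn hn hmm h2 hZ (by rw [abs_le]; omega)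
      have hD0 : D = 0 := by omega
      rw [hD0] at hDe; push_cast at hDe
      linear_combination hDe
  · -- (1,0,1): survivor pattern
    have hother : ∀ i, i ≠ j0 → p.2 i = 0 := by
      intro i hij
      obtain ⟨A, hA, hAe⟩ := (rel_facts S1).2.1 i
      obtain ⟨B, hB, hBe⟩ := (rel_facts S2).2.1 i
      obtain ⟨C, hC, hCe⟩ := (rel_facts S3).2.1 i
      obtain ⟨D, hD, hDe⟩ := (rel_facts S4).2.1 i
      simp only [Pi.zero_apply] at hAe hBe hCe hDe
      rw [ev_other hij] at hAe
      rw [hp1, hf1 hm h2] at hAe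
      rw [hq1, f_zero hm] at hBe hCe
      rw [f_zero hm] at hDe
      have hZ : ((-2*A - B + C - D : ℤ) : ZMod n) = 0 := by
        push_cast; linear_combination hAe + hBe - hCe + hDe
      have hint := killn hn hmm h2 hZ (by rw [abs_le]; omega)
      have hA0 : A = 0 := by omega
      rw [hA0] at hAe; push_cast at hAe
      linear_combination -hAe
    obtain ⟨A, hA, hAe⟩ := (rel_facts S1).2.1 j0
    obtain ⟨B, hB, hBe⟩ := (rel_facts S2).2.1 j0
    obtain ⟨C, hC, hCe⟩ := (rel_facts S3).2.1 j0
    obtain ⟨D, hD, hDe⟩ := (rel_facts S4).2.1 j0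
    simp only [Pi.zero_apply] at hAe hBe hCe hDe
    rw [ev_self] at hAe
    rw [hp1, hf1 hm h2] at hAe
    rw [hq1, f_zero hm] at hBe hCe
    rw [f_zero hm] at hDe
    have hZ : ((2 - 2*A - B + C - D : ℤ) : ZMod n) = 0 := by
      push_cast; linear_combination hAe + hBe - hCe + hDe
    have hint := killn hn hmm h2 hZ (by rw [abs_le]; omega)
    rcases (by omega : A = 0 ∨ A = 1) with hA0 | hA1
    · -- survivor : p = (1, ev j0 2)
      refine Prod.ext hp1 (funext fun i => ?_)
      show p.2 i = ev n j0 2 i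
      by_cases hij : i = j0
      · subst hij
        rw [ev_self]
        rw [hA0] at hAe; push_cast at hAe
        linear_combination -hAe
      · rw [ev_other hij]
        exact hother i hij
    · -- p = v : contradiction
      exfalso; apply hpv
      refine Prod.ext hp1 (funext fun i => ?_)
      simp only [Pi.zero_apply]
      by_cases hij : i = j0
      · subst hij
        rw [hA1] at hAe; push_cast at hAe
        linear_combination -hAe
      · exact hother i hij
  · -- (1,0,-1): p = v, contradiction
    exfalso; apply hpv
    refine Prod.ext hp1 (funext fun i => ?_)
    obtain ⟨A, hA, hAe⟩ := (rel_facts S1).2.1 i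
    obtain ⟨B, hB, hBe⟩ := (rel_facts S2).2.1 i
    obtain ⟨C, hC, hCe⟩ := (rel_facts S3).2.1 i
    obtain ⟨D, hD, hDe⟩ := (rel_facts S4).2.1 i
    simp only [Pi.zero_apply] at hAe hBe hCe hDe ⊢
    rw [hp1, hf1 hm h2] at hAe
    rw [hq1, f_zero hm] at hBe
    rw [hr1] at hCe hDe
    by_cases hij : i = j0
    · subst hij
      rw [ev_self] at hAe
      have hZ : ((4 - 4*A - 2*B - C + D : ℤ) : ZMod n) = 0 := by
        push_cast
        linear_combination 2*hAe + 2*hBe + 2*hCe - 2*hDe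
          + ((C : ZMod n) - (D : ZMod n)) * (hfm1 hm h2)
      have hint := killn hn hmm h2 hZ (by rw [abs_le]; omega)
      have hA1 : A = 1 := by omega
      rw [hA1] at hAe; push_cast at hAe
      linear_combination -hAe
    · rw [ev_other hij] at hAe
      have hZ : ((-4*A - 2*B - C + D : ℤ) : ZMod n) = 0 := by
        push_cast
        linear_combination 2*hAe + 2*hBe + 2*hCe - 2*hDe
          + ((C : ZMod n) - (D : ZMod n)) * (hfm1 hm h2)
      have hint := killn hn hmm h2 hZ (by rw [abs_le]; omega)
      have hA0 : A = 0 := by omega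
      rw [hA0] at hAe; push_cast at hAe
      linear_combination -hAe


lemma F5lem (hm : 6 < m) (hn : 7 < n) (h2 : (2 : ZMod n) ^ m = 1) (j0 : Fin (k-1))
    {p q r : ZMod m × (Fin (k-1) → ZMod n)}
    (h1 : (bouwer k m n).Adj ((2 : ZMod m), ev n j0 1) p)
    (h2' : (bouwer k m n).Adj p q) (h3 : (bouwer k m n).Adj q r)
    (h4 : (bouwer k m n).Adj r ((0 : ZMod m), (0 : Fin (k-1) → ZMod n)))
    (hpx : p ≠ ((1 : ZMod m), ev n j0 1))
    (hqz : q ≠ ((2 : ZMod m), ev n j0 1))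
    (hrx : r ≠ ((1 : ZMod m), ev n j0 1)) :
    r = ((1 : ZMod m), (0 : Fin (k-1) → ZMod n)) := by
  have hmm : 0 < m := by omega
  haveI : Fact (1 < n) := ⟨by omega⟩
  have h10 : (1 : ZMod n) ≠ 0 := one_ne_zero
  have hz : ((2 : ZMod m), ev n j0 1).1 = (((2:ℤ)) : ZMod m) := by push_cast; rfl
  have hy : ((0 : ZMod m), (0 : Fin (k-1) → ZMod n)).1 = (((0:ℤ)) : ZMod m) := by push_cast; rfl
  rcases patt20 hm hz hy h1 h2' h3 h4 with
    ⟨S1,S2,S3,S4,hp1,hq1,hr1⟩ | ⟨S1,S2,S3,S4,hp1,hq1,hr1⟩ |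
    ⟨S1,S2,S3,S4,hp1,hq1,hr1⟩ | ⟨S1,S2,S3,S4,hp1,hq1,hr1⟩
  all_goals push_cast at hp1 hq1 hr1
  · -- (3,2,1): r = x, contradiction
    exfalso; apply hrx
    refine Prod.ext hr1 (funext fun i => ?_)
    show r.2 i = ev n j0 1 i
    obtain ⟨A, hA, hAe⟩ := (rel_facts S1).2.1 i
    obtain ⟨B, hB, hBe⟩ := (rel_facts S2).2.1 i
    obtain ⟨C, hC, hCe⟩ := (rel_facts S3).2.1 i
    obtain ⟨D, hD, hDe⟩ := (rel_facts S4).2.1 i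
    simp only [Pi.zero_apply] at hAe hBe hCe hDe
    rw [hf2 hm h2] at hAe
    rw [hq1, hf2 hm h2] at hBe
    rw [hr1, hf1 hm h2] at hCe
    rw [f_zero hm] at hDe
    by_cases hij : i = j0
    · subst hij
      rw [ev_self] at hAe ⊢
      have hZ : ((1 + 4*A - 4*B - 2*C - D : ℤ) : ZMod n) = 0 := by
        push_cast; linear_combination -hAe + hBe + hCe + hDe
      have hint := killn hn hmm h2 hZ (by rw [abs_le]; omega)
      have hD1 : D = 1 := by omega
      rw [hD1] at hDe; push_cast at hDe
      linear_combination hDe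
    · rw [ev_other hij] at hAe ⊢
      have hZ : ((4*A - 4*B - 2*C - D : ℤ) : ZMod n) = 0 := by
        push_cast; linear_combination -hAe + hBe + hCe + hDe
      have hint := killn hn hmm h2 hZ (by rw [abs_le]; omega)
      have hD0 : D = 0 := by omega
      rw [hD0] at hDe; push_cast at hDe
      linear_combination hDe
  · -- (1,2,1): r = x, contradiction
    exfalso; apply hrx
    refine Prod.ext hr1 (funext fun i => ?_)
    show r.2 i = ev n j0 1 i
    obtain ⟨A, hA, hAe⟩ := (rel_facts S1).2.1 i
    obtain ⟨B, hB, hBe⟩ := (rel_facts S2).2.1 i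
    obtain ⟨C, hC, hCe⟩ := (rel_facts S3).2.1 i
    obtain ⟨D, hD, hDe⟩ := (rel_facts S4).2.1 i
    simp only [Pi.zero_apply] at hAe hBe hCe hDe
    rw [hp1, hf1 hm h2] at hAe hBe
    rw [hr1, hf1 hm h2] at hCe
    rw [f_zero hm] at hDe
    by_cases hij : i = j0
    · subst hij
      rw [ev_self] at hAe ⊢
      have hZ : ((1 - 2*A + 2*B - 2*C - D : ℤ) : ZMod n) = 0 := by
        push_cast; linear_combination hAe - hBe + hCe + hDe
      have hint := killn hn hmm h2 hZ (by rw [abs_le]; omega)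
      have hD1 : D = 1 := by omega
      rw [hD1] at hDe; push_cast at hDe
      linear_combination hDe
    · rw [ev_other hij] at hAe ⊢
      have hZ : ((-2*A + 2*B - 2*C - D : ℤ) : ZMod n) = 0 := by
        push_cast; linear_combination hAe - hBe + hCe + hDe
      have hint := killn hn hmm h2 hZ (by rw [abs_le]; omega)
      have hD0 : D = 0 := by omega
      rw [hD0] at hDe; push_cast at hDe
      linear_combination hDe
  · -- (1,0,1): survivor pattern
    have hother : ∀ i, i ≠ j0 →
        p.2 i = 0 ∧ (r.2 i = 0 ∨ r.2 i ≠ q.2 i) := by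
      intro i hij
      obtain ⟨A, hA, hAe⟩ := (rel_facts S1).2.1 i
      obtain ⟨B, hB, hBe⟩ := (rel_facts S2).2.1 i
      obtain ⟨C, hC, hCe⟩ := (rel_facts S3).2.1 i
      obtain ⟨D, hD, hDe⟩ := (rel_facts S4).2.1 i
      simp only [Pi.zero_apply] at hAe hBe hCe hDe
      rw [ev_other hij] at hAe
      rw [hp1, hf1 hm h2] at hAe
      rw [hq1, f_zero hm] at hBe hCe
      rw [f_zero hm] at hDe
      have hZ : ((-2*A - B + C - D : ℤ) : ZMod n) = 0 := by
        push_cast; linear_combination hAe + hBe - hCe + hDe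
      have hint := killn hn hmm h2 hZ (by rw [abs_le]; omega)
      have hA0 : A = 0 := by omega
      constructor
      · rw [hA0] at hAe; push_cast at hAe
        linear_combination -hAe
      · rcases (by omega : D = 0 ∨ (D = 1 ∧ C = 1)) with hD0 | ⟨hD1, hC1⟩
        · left; rw [hD0] at hDe; push_cast at hDe; linear_combination hDe
        · right
          rw [hC1] at hCe; push_cast at hCe
          intro hrq
          rw [hrq] at hCe
          exact h10 (by linear_combination -hCe)
    obtain ⟨A, hA, hAe⟩ := (rel_facts S1).2.1 j0
    obtain ⟨B, hB, hBe⟩ := (rel_facts S2).2.1 j0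
    obtain ⟨C, hC, hCe⟩ := (rel_facts S3).2.1 j0
    obtain ⟨D, hD, hDe⟩ := (rel_facts S4).2.1 j0
    simp only [Pi.zero_apply] at hAe hBe hCe hDe
    rw [ev_self] at hAe
    rw [hp1, hf1 hm h2] at hAe
    rw [hq1, f_zero hm] at hBe hCe
    rw [f_zero hm] at hDe
    have hZ : ((1 - 2*A - B + C - D : ℤ) : ZMod n) = 0 := by
      push_cast; linear_combination hAe + hBe - hCe + hDe
    have hint := killn hn hmm h2 hZ (by rw [abs_le]; omega)
    rcases (by omega : A = 0 ∨ A = 1) with hA0 | hA1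
    · -- p = x : contradiction
      exfalso; apply hpx
      refine Prod.ext hp1 (funext fun i => ?_)
      show p.2 i = ev n j0 1 i
      by_cases hij : i = j0
      · subst hij
        rw [ev_self]
        rw [hA0] at hAe; push_cast at hAe
        linear_combination -hAe
      · rw [ev_other hij]
        exact (hother i hij).1
    · -- survivor : r = (1, 0)
      have hBD : B = 0 ∧ D = 0 ∧ C = 1 := by omega
      obtain ⟨hB0, hD0, hC1⟩ := hBD
      have hchj0 : r.2 j0 ≠ q.2 j0 := by
        rw [hC1] at hCe; push_cast at hCe
        intro hrq
        rw [hrq] at hCe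
        exact h10 (by linear_combination -hCe)
      refine Prod.ext hr1 (funext fun i => ?_)
      show r.2 i = 0
      by_cases hij : i = j0
      · subst hij
        rw [hD0] at hDe; push_cast at hDe
        linear_combination hDe
      · rcases (hother i hij).2 with h0 | hch
        · exact h0
        · exact absurd ((rel_facts S3).2.2 i j0 hch hchj0) hij
  · -- (1,0,-1): p = x, contradiction
    exfalso; apply hpx
    refine Prod.ext hp1 (funext fun i => ?_)
    show p.2 i = ev n j0 1 i
    obtain ⟨A, hA, hAe⟩ := (rel_facts S1).2.1 i
    obtain ⟨B, hB, hBe⟩ := (rel_facts S2).2.1 i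
    obtain ⟨C, hC, hCe⟩ := (rel_facts S3).2.1 i
    obtain ⟨D, hD, hDe⟩ := (rel_facts S4).2.1 i
    simp only [Pi.zero_apply] at hAe hBe hCe hDe
    rw [hp1, hf1 hm h2] at hAe
    rw [hq1, f_zero hm] at hBe
    rw [hr1] at hCe hDe
    by_cases hij : i = j0
    · subst hij
      rw [ev_self] at hAe ⊢
      have hZ : ((2 - 4*A - 2*B - C + D : ℤ) : ZMod n) = 0 := by
        push_cast
        linear_combination 2*hAe + 2*hBe + 2*hCe - 2*hDe
          + ((C : ZMod n) - (D : ZMod n)) * (hfm1 hm h2)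
      have hint := killn hn hmm h2 hZ (by rw [abs_le]; omega)
      have hA0 : A = 0 := by omega
      rw [hA0] at hAe; push_cast at hAe
      linear_combination -hAe
    · rw [ev_other hij] at hAe ⊢
      have hZ : ((-4*A - 2*B - C + D : ℤ) : ZMod n) = 0 := by
        push_cast
        linear_combination 2*hAe + 2*hBe + 2*hCe - 2*hDe
          + ((C : ZMod n) - (D : ZMod n)) * (hfm1 hm h2)
      have hint := killn hn hmm h2 hZ (by rw [abs_le]; omega)
      have hA0 : A = 0 := by omega
      rw [hA0] at hAe; push_cast at hAe
      linear_combination -hAe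


lemma F2plem (hm : 6 < m) (hn : 7 < n) (h2 : (2 : ZMod n) ^ m = 1)
    {p q r : ZMod m × (Fin (k-1) → ZMod n)}
    (h1 : (bouwer k m n).Adj ((-1 : ZMod m), (0 : Fin (k-1) → ZMod n)) p)
    (h2' : (bouwer k m n).Adj p q) (h3 : (bouwer k m n).Adj q r)
    (h4 : (bouwer k m n).Adj r ((1 : ZMod m), (0 : Fin (k-1) → ZMod n)))
    (hpu : p ≠ ((0 : ZMod m), (0 : Fin (k-1) → ZMod n)))
    (hru : r ≠ ((0 : ZMod m), (0 : Fin (k-1) → ZMod n))) : False := by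
  have hmm : 0 < m := by omega
  have hz : ((-1 : ZMod m), (0 : Fin (k-1) → ZMod n)).1 = (((-1:ℤ)) : ZMod m) := by
    push_cast; rfl
  have hy : ((1 : ZMod m), (0 : Fin (k-1) → ZMod n)).1 = (((1:ℤ)) : ZMod m) := by push_cast; rfl
  rcases pattm1 hm hz hy h1 h2' h3 h4 with
    ⟨S1,S2,S3,S4,hp1,hq1,hr1⟩ | ⟨S1,S2,S3,S4,hp1,hq1,hr1⟩ |
    ⟨S1,S2,S3,S4,hp1,hq1,hr1⟩ | ⟨S1,S2,S3,S4,hp1,hq1,hr1⟩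
  all_goals push_cast at hp1 hq1 hr1
  · -- (0,1,2): p = u
    apply hpu
    refine Prod.ext hp1 (funext fun i => ?_)
    obtain ⟨A, hA, hAe⟩ := (rel_facts S1).2.1 i
    obtain ⟨B, hB, hBe⟩ := (rel_facts S2).2.1 i
    obtain ⟨C, hC, hCe⟩ := (rel_facts S3).2.1 i
    obtain ⟨D, hD, hDe⟩ := (rel_facts S4).2.1 i
    simp only [Pi.zero_apply] at hAe hBe hCe hDe ⊢
    rw [hp1, f_zero hm] at hBe
    rw [hq1, hf1 hm h2] at hCe
    rw [hf1 hm h2] at hDe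
    have hZ : ((2*A + 4*B + 8*C - 8*D : ℤ) : ZMod n) = 0 := by
      push_cast
      linear_combination -4*hAe - 4*hBe - 4*hCe + 4*hDe - 2*(A : ZMod n)*(hfm1 hm h2)
    have hint := killn2 hn hmm h2 hZ (by omega) (by rw [abs_le]; omega)
    have hA0 : A = 0 := by omega
    rw [hA0] at hAe; push_cast at hAe
    linear_combination hAe
  · -- (0,1,0): p = u
    apply hpu
    refine Prod.ext hp1 (funext fun i => ?_)
    obtain ⟨A, hA, hAe⟩ := (rel_facts S1).2.1 i
    obtain ⟨B, hB, hBe⟩ := (rel_facts S2).2.1 i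
    obtain ⟨C, hC, hCe⟩ := (rel_facts S3).2.1 i
    obtain ⟨D, hD, hDe⟩ := (rel_facts S4).2.1 i
    simp only [Pi.zero_apply] at hAe hBe hCe hDe ⊢
    rw [hp1, f_zero hm] at hBe
    rw [hr1, f_zero hm] at hCe hDe
    have hZ : ((2*A + 4*B - 4*C + 4*D : ℤ) : ZMod n) = 0 := by
      push_cast
      linear_combination -4*hAe - 4*hBe + 4*hCe - 4*hDe - 2*(A : ZMod n)*(hfm1 hm h2)
    have hint := killn2 hn hmm h2 hZ (by omega) (by rw [abs_le]; omega)
    have hA0 : A = 0 := by omega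
    rw [hA0] at hAe; push_cast at hAe
    linear_combination hAe
  · -- (0,-1,0): r = u
    apply hru
    refine Prod.ext hr1 (funext fun i => ?_)
    obtain ⟨A, hA, hAe⟩ := (rel_facts S1).2.1 i
    obtain ⟨B, hB, hBe⟩ := (rel_facts S2).2.1 i
    obtain ⟨C, hC, hCe⟩ := (rel_facts S3).2.1 i
    obtain ⟨D, hD, hDe⟩ := (rel_facts S4).2.1 i
    simp only [Pi.zero_apply] at hAe hBe hCe hDe ⊢
    rw [hq1] at hBe hCe
    rw [hr1, f_zero hm] at hDe
    have hZ : ((A - B + C + 2*D : ℤ) : ZMod n) = 0 := by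
      push_cast
      linear_combination -2*hAe + 2*hBe - 2*hCe - 2*hDe
        - ((A : ZMod n) - (B : ZMod n) + (C : ZMod n))*(hfm1 hm h2)
    have hint := killn hn hmm h2 hZ (by rw [abs_le]; omega)
    have hD0 : D = 0 := by omega
    rw [hD0] at hDe; push_cast at hDe
    linear_combination -hDe
  · -- (-2,-1,0): r = u
    apply hru
    refine Prod.ext hr1 (funext fun i => ?_)
    obtain ⟨A, hA, hAe⟩ := (rel_facts S1).2.1 i
    obtain ⟨B, hB, hBe⟩ := (rel_facts S2).2.1 i
    obtain ⟨C, hC, hCe⟩ := (rel_facts S3).2.1 i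
    obtain ⟨D, hD, hDe⟩ := (rel_facts S4).2.1 i
    simp only [Pi.zero_apply] at hAe hBe hCe hDe ⊢
    rw [hp1] at hAe hBe
    rw [hq1] at hCe
    rw [hr1, f_zero hm] at hDe
    have hZ : ((B - A + 2*C + 4*D : ℤ) : ZMod n) = 0 := by
      push_cast
      linear_combination 4*hAe - 4*hBe - 4*hCe - 4*hDe
        + (2*(A : ZMod n) - 2*(B : ZMod n))*(hfm2 hm h2)
        + ((A : ZMod n) - (B : ZMod n) - 2*(C : ZMod n))*(hfm1 hm h2)
    have hint := killn hn hmm h2 hZ (by rw [abs_le]; omega)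
    have hD0 : D = 0 := by omega
    rw [hD0] at hDe; push_cast at hDe
    linear_combination -hDe

lemma F3plem (hm : 6 < m) (hn : 7 < n) (h2 : (2 : ZMod n) ^ m = 1) (j0 : Fin (k-1))
    {p q r : ZMod m × (Fin (k-1) → ZMod n)}
    (h1 : (bouwer k m n).Adj ((-1 : ZMod m), ev n j0 (-(f n (-1 : ZMod m)))) p)
    (h2' : (bouwer k m n).Adj p q) (h3 : (bouwer k m n).Adj q r)
    (h4 : (bouwer k m n).Adj r ((1 : ZMod m), (0 : Fin (k-1) → ZMod n)))
    (hpu : p ≠ ((0 : ZMod m), (0 : Fin (k-1) → ZMod n)))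
    (hru : r ≠ ((0 : ZMod m), (0 : Fin (k-1) → ZMod n))) :
    p = ((0 : ZMod m), ev n j0 (-(f n (-1 : ZMod m)))) := by
  have hmm : 0 < m := by omega
  have htne : f n (-1 : ZMod m) ≠ 0 := f_ne_zero hm h2 hn _
  have hz : ((-1 : ZMod m), ev n j0 (-(f n (-1 : ZMod m)))).1 = (((-1:ℤ)) : ZMod m) := by
    push_cast; rfl
  have hy : ((1 : ZMod m), (0 : Fin (k-1) → ZMod n)).1 = (((1:ℤ)) : ZMod m) := by push_cast; rfl
  rcases pattm1 hm hz hy h1 h2' h3 h4 with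
    ⟨S1,S2,S3,S4,hp1,hq1,hr1⟩ | ⟨S1,S2,S3,S4,hp1,hq1,hr1⟩ |
    ⟨S1,S2,S3,S4,hp1,hq1,hr1⟩ | ⟨S1,S2,S3,S4,hp1,hq1,hr1⟩
  all_goals push_cast at hp1 hq1 hr1
  · -- (0,1,2): p = u, contradiction
    exfalso; apply hpu
    refine Prod.ext hp1 (funext fun i => ?_)
    obtain ⟨A, hA, hAe⟩ := (rel_facts S1).2.1 i
    obtain ⟨B, hB, hBe⟩ := (rel_facts S2).2.1 i
    obtain ⟨C, hC, hCe⟩ := (rel_facts S3).2.1 i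
    obtain ⟨D, hD, hDe⟩ := (rel_facts S4).2.1 i
    simp only [Pi.zero_apply] at hAe hBe hCe hDe ⊢
    rw [hp1, f_zero hm] at hBe
    rw [hq1, hf1 hm h2] at hCe
    rw [hf1 hm h2] at hDe
    by_cases hij : i = j0
    · subst hij
      rw [ev_self] at hAe
      have hZ : ((2*A + 4*B + 8*C - 8*D - 2 : ℤ) : ZMod n) = 0 := by
        push_cast
        linear_combination -4*hAe - 4*hBe - 4*hCe + 4*hDe
          + (2 - 2*(A : ZMod n))*(hfm1 hm h2)
      have hint := killn2 hn hmm h2 hZ (by omega) (by rw [abs_le]; omega)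
      have hA1 : A = 1 := by omega
      rw [hA1] at hAe; push_cast at hAe
      linear_combination hAe
    · rw [ev_other hij] at hAe
      have hZ : ((2*A + 4*B + 8*C - 8*D : ℤ) : ZMod n) = 0 := by
        push_cast
        linear_combination -4*hAe - 4*hBe - 4*hCe + 4*hDe - 2*(A : ZMod n)*(hfm1 hm h2)
      have hint := killn2 hn hmm h2 hZ (by omega) (by rw [abs_le]; omega)
      have hA0 : A = 0 := by omega
      rw [hA0] at hAe; push_cast at hAe
      linear_combination hAe
  · -- (0,1,0): p = u, contradiction
    exfalso; apply hpu
    refine Prod.ext hp1 (funext fun i => ?_)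
    obtain ⟨A, hA, hAe⟩ := (rel_facts S1).2.1 i
    obtain ⟨B, hB, hBe⟩ := (rel_facts S2).2.1 i
    obtain ⟨C, hC, hCe⟩ := (rel_facts S3).2.1 i
    obtain ⟨D, hD, hDe⟩ := (rel_facts S4).2.1 i
    simp only [Pi.zero_apply] at hAe hBe hCe hDe ⊢
    rw [hp1, f_zero hm] at hBe
    rw [hr1, f_zero hm] at hCe hDe
    by_cases hij : i = j0
    · subst hij
      rw [ev_self] at hAe
      have hZ : ((2*A + 4*B - 4*C + 4*D - 2 : ℤ) : ZMod n) = 0 := by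
        push_cast
        linear_combination -4*hAe - 4*hBe + 4*hCe - 4*hDe
          + (2 - 2*(A : ZMod n))*(hfm1 hm h2)
      have hint := killn2 hn hmm h2 hZ (by omega) (by rw [abs_le]; omega)
      have hA1 : A = 1 := by omega
      rw [hA1] at hAe; push_cast at hAe
      linear_combination hAe
    · rw [ev_other hij] at hAe
      have hZ : ((2*A + 4*B - 4*C + 4*D : ℤ) : ZMod n) = 0 := by
        push_cast
        linear_combination -4*hAe - 4*hBe + 4*hCe - 4*hDe - 2*(A : ZMod n)*(hfm1 hm h2)
      have hint := killn2 hn hmm h2 hZ (by omega) (by rw [abs_le]; omega)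
      have hA0 : A = 0 := by omega
      rw [hA0] at hAe; push_cast at hAe
      linear_combination hAe
  · -- (0,-1,0): survivor pattern
    have hother : ∀ i, i ≠ j0 → r.2 i = 0 ∧ (p.2 i = 0 ∨ p.2 i ≠ q.2 i) := by
      intro i hij
      obtain ⟨A, hA, hAe⟩ := (rel_facts S1).2.1 i
      obtain ⟨B, hB, hBe⟩ := (rel_facts S2).2.1 i
      obtain ⟨C, hC, hCe⟩ := (rel_facts S3).2.1 i
      obtain ⟨D, hD, hDe⟩ := (rel_facts S4).2.1 i
      simp only [Pi.zero_apply] at hAe hBe hCe hDe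
      rw [ev_other hij] at hAe
      rw [hq1] at hBe hCe
      rw [hr1, f_zero hm] at hDe
      have hZ : ((A - B + C + 2*D : ℤ) : ZMod n) = 0 := by
        push_cast
        linear_combination -2*hAe + 2*hBe - 2*hCe - 2*hDe
          - ((A : ZMod n) - (B : ZMod n) + (C : ZMod n))*(hfm1 hm h2)
      have hint := killn hn hmm h2 hZ (by rw [abs_le]; omega)
      have hD0 : D = 0 := by omega
      constructor
      · rw [hD0] at hDe; push_cast at hDe
        linear_combination -hDe
      · rcases (by omega : B = 0 ∨ B = 1) with hB0 | hB1
        · left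
          have hA0 : A = 0 := by omega
          rw [hA0] at hAe; push_cast at hAe
          linear_combination hAe
        · right
          rw [hB1] at hBe; push_cast at hBe
          intro hpq
          rw [hpq] at hBe
          exact htne (by linear_combination -hBe)
    obtain ⟨A, hA, hAe⟩ := (rel_facts S1).2.1 j0
    obtain ⟨B, hB, hBe⟩ := (rel_facts S2).2.1 j0
    obtain ⟨C, hC, hCe⟩ := (rel_facts S3).2.1 j0
    obtain ⟨D, hD, hDe⟩ := (rel_facts S4).2.1 j0
    simp only [Pi.zero_apply] at hAe hBe hCe hDe
    rw [ev_self] at hAe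
    rw [hq1] at hBe hCe
    rw [hr1, f_zero hm] at hDe
    have hZ : ((A - B + C + 2*D - 1 : ℤ) : ZMod n) = 0 := by
      push_cast
      linear_combination -2*hAe + 2*hBe - 2*hCe - 2*hDe
        - ((A : ZMod n) - (B : ZMod n) + (C : ZMod n) - 1)*(hfm1 hm h2)
    have hint := killn hn hmm h2 hZ (by rw [abs_le]; omega)
    rcases (by omega : D = 0 ∨ (D = 1 ∧ A = 0 ∧ B = 1 ∧ C = 0)) with hD0 | ⟨hD1, hA0, hB1, hC0⟩
    · -- r = u, contradiction
      exfalso; apply hru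
      refine Prod.ext hr1 (funext fun i => ?_)
      simp only [Pi.zero_apply]
      by_cases hij : i = j0
      · subst hij
        rw [hD0] at hDe; push_cast at hDe
        linear_combination -hDe
      · exact (hother i hij).1
    · -- survivor : p = (0, ev j0 (-t))
      have hchj0 : p.2 j0 ≠ q.2 j0 := by
        rw [hB1] at hBe; push_cast at hBe
        intro hpq
        rw [hpq] at hBe
        exact htne (by linear_combination -hBe)
      refine Prod.ext hp1 (funext fun i => ?_)
      show p.2 i = ev n j0 (-(f n (-1 : ZMod m))) i
      by_cases hij : i = j0
      · subst hij
        rw [ev_self]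
        rw [hA0] at hAe; push_cast at hAe
        linear_combination hAe
      · rw [ev_other hij]
        rcases (hother i hij).2 with h0 | hch
        · exact h0
        · exact absurd ((rel_facts S2).2.2 i j0 hch hchj0) hij
  · -- (-2,-1,0): r = u, contradiction
    exfalso; apply hru
    refine Prod.ext hr1 (funext fun i => ?_)
    obtain ⟨A, hA, hAe⟩ := (rel_facts S1).2.1 i
    obtain ⟨B, hB, hBe⟩ := (rel_facts S2).2.1 i
    obtain ⟨C, hC, hCe⟩ := (rel_facts S3).2.1 i
    obtain ⟨D, hD, hDe⟩ := (rel_facts S4).2.1 i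
    simp only [Pi.zero_apply] at hAe hBe hCe hDe ⊢
    rw [hp1] at hAe hBe
    rw [hq1] at hCe
    rw [hr1, f_zero hm] at hDe
    by_cases hij : i = j0
    · subst hij
      rw [ev_self] at hAe
      have hZ : ((B - A + 2*C + 4*D - 2 : ℤ) : ZMod n) = 0 := by
        push_cast
        linear_combination 4*hAe - 4*hBe - 4*hCe - 4*hDe
          + (2*(A : ZMod n) - 2*(B : ZMod n))*(hfm2 hm h2)
          + ((A : ZMod n) - (B : ZMod n) - 2*(C : ZMod n) + 2)*(hfm1 hm h2)
      have hint := killn hn hmm h2 hZ (by rw [abs_le]; omega)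
      have hD0 : D = 0 := by omega
      rw [hD0] at hDe; push_cast at hDe
      linear_combination -hDe
    · rw [ev_other hij] at hAe
      have hZ : ((B - A + 2*C + 4*D : ℤ) : ZMod n) = 0 := by
        push_cast
        linear_combination 4*hAe - 4*hBe - 4*hCe - 4*hDe
          + (2*(A : ZMod n) - 2*(B : ZMod n))*(hfm2 hm h2)
          + ((A : ZMod n) - (B : ZMod n) - 2*(C : ZMod n))*(hfm1 hm h2)
      have hint := killn hn hmm h2 hZ (by rw [abs_le]; omega)
      have hD0 : D = 0 := by omega
      rw [hD0] at hDe; push_cast at hDe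
      linear_combination -hDe


lemma F4lem (hm : 6 < m) (hn : 7 < n) (h2 : (2 : ZMod n) ^ m = 1) (i0 : Fin (k-1))
    {p q r : ZMod m × (Fin (k-1) → ZMod n)}
    (h1 : (bouwer k m n).Adj ((0 : ZMod m), ev n i0 (-1)) p)
    (h2' : (bouwer k m n).Adj p q) (h3 : (bouwer k m n).Adj q r)
    (h4 : (bouwer k m n).Adj r ((0 : ZMod m), (0 : Fin (k-1) → ZMod n)))
    (hr1 : r.1 = 1)
    (hqz : q ≠ ((0 : ZMod m), ev n i0 (-1))) :
    p.1 = 1 := by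
  have hmm : 0 < m := by omega
  rcases adj_or h1 with R1 | R1
  · have L1 := (rel_facts R1).1
    rw [L1]; show (0 : ZMod m) + 1 = 1; ring
  · have L1 := (rel_facts R1).1
    have hp1 : p.1 = -1 := by linear_combination -L1
    exfalso
    rcases adj_or h2' with R2 | R2 <;> have L2 := (rel_facts R2).1
    · -- Rel p q : q.1 = 0
      have hq1 : q.1 = 0 := by linear_combination L2 + hp1
      rcases adj_or h3 with R3 | R3 <;> have L3 := (rel_facts R3).1
      · -- Rel q r : main case, q = z
        rcases adj_or h4 with R4 | R4 <;> have L4 := (rel_facts R4).1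
        · -- Rel r u : u.1 = r.1 + 1 : 0 = 2 kill
          have hC : ((2 : ℤ) : ZMod m) = 0 := by
            push_cast; linear_combination -L4 - hr1
          have := killm hm hC (by norm_num); norm_num at this
        · -- R4 : Rel u r : main coordinate analysis
          apply hqz
          refine Prod.ext hq1 (funext fun i => ?_)
          show q.2 i = ev n i0 (-1) i
          obtain ⟨A, hA, hAe⟩ := (rel_facts R1).2.1 i
          obtain ⟨B, hB, hBe⟩ := (rel_facts R2).2.1 i
          obtain ⟨C, hC, hCe⟩ := (rel_facts R3).2.1 i
          obtain ⟨D, hD, hDe⟩ := (rel_facts R4).2.1 i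
          simp only [Pi.zero_apply] at hAe hBe hCe hDe
          rw [hp1] at hAe hBe
          rw [hq1, f_zero hm] at hCe
          rw [f_zero hm] at hDe
          by_cases hij : i = i0
          · subst hij
            rw [ev_self] at hAe ⊢
            have hZ : ((-A + B + 2*C - 2*D - 2 : ℤ) : ZMod n) = 0 := by
              push_cast
              linear_combination 2*hAe - 2*hBe - 2*hCe + 2*hDe
                + ((A : ZMod n) - (B : ZMod n))*(hfm1 hm h2)
            have hint := killn hn hmm h2 hZ (by rw [abs_le]; omega)
            have hAB : A = B := by omega
            rw [hAB] at hAe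
            linear_combination hBe - hAe
          · rw [ev_other hij] at hAe ⊢
            have hZ : ((-A + B + 2*C - 2*D : ℤ) : ZMod n) = 0 := by
              push_cast
              linear_combination 2*hAe - 2*hBe - 2*hCe + 2*hDe
                + ((A : ZMod n) - (B : ZMod n))*(hfm1 hm h2)
            have hint := killn hn hmm h2 hZ (by rw [abs_le]; omega)
            have hAB : A = B := by omega
            rw [hAB] at hAe
            linear_combination hBe - hAe
      · -- Rel r q : q.1 = 2 vs 0 kill
        have hC : ((2 : ℤ) : ZMod m) = 0 := by
          push_cast; linear_combination -L3 - hr1 + hq1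
        have := killm hm hC (by norm_num); norm_num at this
    · -- Rel q p : q.1 = -2
      have hq1 : q.1 = -2 := by linear_combination hp1 - L2
      rcases adj_or h3 with R3 | R3 <;> have L3 := (rel_facts R3).1
      · -- r.1 = q.1 + 1 = -1 vs 1
        have hC : ((2 : ℤ) : ZMod m) = 0 := by
          push_cast; linear_combination -hr1 + L3 + hq1
        have := killm hm hC (by norm_num); norm_num at this
      · -- q.1 = r.1 + 1 = 2 vs -2
        have hC : ((4 : ℤ) : ZMod m) = 0 := by
          push_cast; linear_combination -L3 - hr1 + hq1
        have := killm hm hC (by norm_num); norm_num at this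


section helpers

lemma step_shape {x y : ZMod m × (Fin (k-1) → ZMod n)} (R : bouwerRel k m n x y) :
    y.2 = x.2 ∨ ∃ j, (∀ i, i ≠ j → y.2 i = x.2 i) ∧ y.2 j = x.2 j + f n x.1 := R.2

lemma mne (hm : 6 < m) {x y : ZMod m} {A : ℤ} (hxy : x - y = ((A : ℤ) : ZMod m))
    (hA : A ≠ 0) (hb : |A| ≤ 6) : x ≠ y := by
  intro h
  rw [h] at hxy
  have h0 : ((A : ℤ) : ZMod m) = 0 := by rw [← hxy]; ring
  exact hA (killm hm h0 hb)

lemma nne (hm : 6 < m) (hn : 7 < n) (h2 : (2 : ZMod n) ^ m = 1) {x y : ZMod n} {A : ℤ}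
    (hxy : 2*(x - y) = ((A : ℤ) : ZMod n)) (hA : A ≠ 0) (hb : |A| ≤ 8) : x ≠ y := by
  intro h
  rw [h] at hxy
  have h0 : ((A : ℤ) : ZMod n) = 0 := by rw [← hxy]; ring
  exact hA (killn hn (by omega) h2 h0 hb)

lemma pne_fst {x y : ZMod m × (Fin (k-1) → ZMod n)} (h : x.1 ≠ y.1) : x ≠ y :=
  fun he => h (by rw [he])

lemma pne_app {x y : ZMod m × (Fin (k-1) → ZMod n)} (i : Fin (k-1)) (h : x.2 i ≠ y.2 i) :
    x ≠ y := fun he => h (by rw [he])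

lemma nbr_v (hm : 6 < m) (h2 : (2 : ZMod n) ^ m = 1)
    {w : ZMod m × (Fin (k-1) → ZMod n)}
    (h : (bouwer k m n).Adj ((1 : ZMod m), (0 : Fin (k-1) → ZMod n)) w) :
    w = ((2 : ZMod m), (0 : Fin (k-1) → ZMod n)) ∨ (∃ j, w = ((2 : ZMod m), ev n j 2)) ∨
    w = ((0 : ZMod m), (0 : Fin (k-1) → ZMod n)) ∨ (∃ j, w = ((0 : ZMod m), ev n j (-1))) := by
  rcases adj_or h with R | R
  · have L := (rel_facts R).1
    dsimp only at L
    have hw1 : w.1 = 2 := by rw [L]; norm_num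
    rcases step_shape R with he | ⟨j, hoth, hj⟩
    · exact Or.inl (Prod.ext hw1 he)
    · refine Or.inr (Or.inl ⟨j, Prod.ext hw1 (funext fun i => ?_)⟩)
      show w.2 i = ev n j 2 i
      by_cases hij : i = j
      · subst hij
        rw [ev_self, hj]
        dsimp only
        simp only [Pi.zero_apply]
        rw [hf1 hm h2]; ring
      · rw [ev_other hij]
        have := hoth i hij
        dsimp only at this
        simpa using this
  · have L := (rel_facts R).1
    dsimp only at L
    have hw1 : w.1 = 0 := by linear_combination -L
    rcases step_shape R with he | ⟨j, hoth, hj⟩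
    · refine Or.inr (Or.inr (Or.inl (Prod.ext hw1 ?_)))
      exact he.symm
    · refine Or.inr (Or.inr (Or.inr ⟨j, Prod.ext hw1 (funext fun i => ?_)⟩))
      show w.2 i = ev n j (-1) i
      dsimp only at hj hoth
      rw [hw1, f_zero hm] at hj
      simp only [Pi.zero_apply] at hj
      by_cases hij : i = j
      · subst hij
        rw [ev_self]
        linear_combination -hj
      · rw [ev_other hij]
        have := hoth i hij
        simpa using this.symm

lemma nbr_u (hm : 6 < m) (h2 : (2 : ZMod n) ^ m = 1)
    {w : ZMod m × (Fin (k-1) → ZMod n)}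
    (h : (bouwer k m n).Adj ((0 : ZMod m), (0 : Fin (k-1) → ZMod n)) w) :
    w = ((1 : ZMod m), (0 : Fin (k-1) → ZMod n)) ∨ (∃ j, w = ((1 : ZMod m), ev n j 1)) ∨
    w = ((-1 : ZMod m), (0 : Fin (k-1) → ZMod n)) ∨
    (∃ j, w = ((-1 : ZMod m), ev n j (-(f n (-1 : ZMod m))))) := by
  rcases adj_or h with R | R
  · have L := (rel_facts R).1
    dsimp only at L
    have hw1 : w.1 = 1 := by rw [L]; norm_num
    rcases step_shape R with he | ⟨j, hoth, hj⟩
    · exact Or.inl (Prod.ext hw1 he)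
    · refine Or.inr (Or.inl ⟨j, Prod.ext hw1 (funext fun i => ?_)⟩)
      show w.2 i = ev n j 1 i
      by_cases hij : i = j
      · subst hij
        rw [ev_self, hj]
        dsimp only
        simp only [Pi.zero_apply]
        rw [f_zero hm]; ring
      · rw [ev_other hij]
        have := hoth i hij
        dsimp only at this
        simpa using this
  · have L := (rel_facts R).1
    dsimp only at L
    have hw1 : w.1 = -1 := by linear_combination -L
    rcases step_shape R with he | ⟨j, hoth, hj⟩
    · refine Or.inr (Or.inr (Or.inl (Prod.ext hw1 ?_)))
      exact he.symm
    · refine Or.inr (Or.inr (Or.inr ⟨j, Prod.ext hw1 (funext fun i => ?_)⟩))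
      show w.2 i = ev n j (-(f n (-1 : ZMod m))) i
      dsimp only at hj hoth
      rw [hw1] at hj
      simp only [Pi.zero_apply] at hj
      by_cases hij : i = j
      · subst hij
        rw [ev_self]
        linear_combination -hj
      · rw [ev_other hij]
        have := hoth i hij
        simpa using this.symm

lemma nbr_up (hm : 6 < m) {z w : ZMod m × (Fin (k-1) → ZMod n)}
    (h : (bouwer k m n).Adj z w) (hlev : w.1 = z.1 + 1) :
    w.2 = z.2 ∨ ∃ j, (∀ i, i ≠ j → w.2 i = z.2 i) ∧ w.2 j = z.2 j + f n z.1 := by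
  rcases adj_or h with R | R
  · exact step_shape R
  · exfalso
    have L := (rel_facts R).1
    have hC : ((2 : ℤ) : ZMod m) = 0 := by
      push_cast; linear_combination -L - hlev
    have := killm hm hC (by norm_num); norm_num at this

end helpers

section main
set_option maxHeartbeats 1600000

lemma no_swap (hk : 1 < k) (hm : 6 < m) (hn : 7 < n) (h2 : (2 : ZMod n) ^ m = 1)
    (φ : Equiv.Perm (ZMod m × (Fin (k - 1) → ZMod n)))
    (hφ : ∀ u v, (bouwer k m n).Adj u v ↔ (bouwer k m n).Adj (φ u) (φ v))
    (hu : φ ((0 : ZMod m), (0 : Fin (k - 1) → ZMod n)) = (1, 0))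
    (hv : φ ((1 : ZMod m), (0 : Fin (k - 1) → ZMod n)) = (0, 0)) : False := by
  have hmm : 0 < m := by omega
  haveI : Fact (1 < n) := ⟨by omega⟩
  set i0 : Fin (k-1) := ⟨0, by omega⟩ with hi0
  -- transport helpers
  have hT : ∀ {a b}, (bouwer k m n).Adj a b → (bouwer k m n).Adj (φ a) (φ b) :=
    fun h => (hφ _ _).mp h
  have hT' : ∀ {a b}, (bouwer k m n).Adj a b → (bouwer k m n).Adj (φ.symm a) (φ.symm b) := by
    intro a b h
    refine (hφ (φ.symm a) (φ.symm b)).mpr ?_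
    rwa [Equiv.apply_symm_apply, Equiv.apply_symm_apply]
  have injφ : Function.Injective φ := φ.injective
  have hsv : φ.symm ((1 : ZMod m), (0 : Fin (k-1) → ZMod n))
      = ((0 : ZMod m), (0 : Fin (k-1) → ZMod n)) := by
    rw [← hu, Equiv.symm_apply_apply]
  -- frequently used inequalities
  have ne10 : (1 : ZMod n) ≠ 0 :=
    nne hm hn h2 (A := 2) (by push_cast; ring) (by norm_num) (by norm_num)
  have ne21 : (2 : ZMod n) ≠ 1 :=
    nne hm hn h2 (A := 2) (by push_cast; ring) (by norm_num) (by norm_num)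
  have nem11 : (-1 : ZMod n) ≠ 1 :=
    nne hm hn h2 (A := -4) (by push_cast; ring) (by norm_num) (by norm_num)
  have nem10 : (-1 : ZMod n) ≠ 0 :=
    nne hm hn h2 (A := -2) (by push_cast; ring) (by norm_num) (by norm_num)
  have nem21 : (-2 : ZMod n) ≠ -1 :=
    nne hm hn h2 (A := -2) (by push_cast; ring) (by norm_num) (by norm_num)
  have mne20 : (2 : ZMod m) ≠ 0 :=
    mne hm (A := 2) (by push_cast; ring) (by norm_num) (by norm_num)
  have mne02 : (0 : ZMod m) ≠ 2 :=
    mne hm (A := -2) (by push_cast; ring) (by norm_num) (by norm_num)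
  have mne1m1 : (1 : ZMod m) ≠ -1 :=
    mne hm (A := 2) (by push_cast; ring) (by norm_num) (by norm_num)
  have mnem11 : (-1 : ZMod m) ≠ 1 :=
    mne hm (A := -2) (by push_cast; ring) (by norm_num) (by norm_num)
  -- explicit adjacencies
  have hadj_uv : (bouwer k m n).Adj ((0 : ZMod m), (0 : Fin (k-1) → ZMod n)) (1, 0) :=
    mkAdjStr hm 0 1 0 (by ring)
  have hadj_ux1 : (bouwer k m n).Adj ((0 : ZMod m), (0 : Fin (k-1) → ZMod n)) (1, ev n i0 1) := by
    refine mkAdj hm 0 1 0 (ev n i0 1) (by ring) i0 ?_ ?_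
    · rw [ev_self]; simp only [Pi.zero_apply]; rw [f_zero hm]; ring
    · intro i hij; rw [ev_other hij]; simp
  have a1 : (bouwer k m n).Adj ((1 : ZMod m), ev n i0 1) (2, ev n i0 1) :=
    mkAdjStr hm 1 2 (ev n i0 1) (by ring)
  have a2 : (bouwer k m n).Adj ((2 : ZMod m), ev n i0 1) (1, ev n i0 (-1)) := by
    refine (mkAdj hm 1 2 (ev n i0 (-1)) (ev n i0 1) (by ring) i0 ?_ ?_).symm
    · rw [ev_self, ev_self, hf1 hm h2]; ring
    · intro i hij; rw [ev_other hij, ev_other hij]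
  have a3 : (bouwer k m n).Adj ((1 : ZMod m), ev n i0 (-1)) (0, ev n i0 (-1)) :=
    (mkAdjStr hm 0 1 (ev n i0 (-1)) (by ring)).symm
  have a4 : (bouwer k m n).Adj ((0 : ZMod m), ev n i0 (-1)) (1, 0) := by
    refine mkAdj hm 0 1 (ev n i0 (-1)) 0 (by ring) i0 ?_ ?_
    · simp only [Pi.zero_apply]; rw [ev_self, f_zero hm]; ring
    · intro i hij; rw [ev_other hij]; simp
  have b1 : (bouwer k m n).Adj ((1 : ZMod m), ev n i0 1) (0, ev n i0 1) :=
    (mkAdjStr hm 0 1 (ev n i0 1) (by ring)).symm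
  have b2 : (bouwer k m n).Adj ((0 : ZMod m), ev n i0 1) (1, ev n i0 2) := by
    refine mkAdj hm 0 1 (ev n i0 1) (ev n i0 2) (by ring) i0 ?_ ?_
    · rw [ev_self, ev_self, f_zero hm]; ring
    · intro i hij; rw [ev_other hij, ev_other hij]
  have b3 : (bouwer k m n).Adj ((1 : ZMod m), ev n i0 2) (2, ev n i0 2) :=
    mkAdjStr hm 1 2 (ev n i0 2) (by ring)
  have b4 : (bouwer k m n).Adj ((2 : ZMod m), ev n i0 2) (1, 0) := by
    refine (mkAdj hm 1 2 0 (ev n i0 2) (by ring) i0 ?_ ?_).symm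
    · simp only [Pi.zero_apply]; rw [ev_self, hf1 hm h2]; ring
    · intro i hij; rw [ev_other hij]; simp
  have c1 : (bouwer k m n).Adj ((0 : ZMod m), ev n i0 (-1)) (-1, ev n i0 (-1)) :=
    (mkAdjStr hm (-1) 0 (ev n i0 (-1)) (by ring)).symm
  have c2 : (bouwer k m n).Adj ((-1 : ZMod m), ev n i0 (-1))
      (0, ev n i0 (-(f n (-1 : ZMod m)))) := by
    refine mkAdj hm (-1) 0 (ev n i0 (-1)) (ev n i0 (-(f n (-1 : ZMod m)))) (by ring) i0 ?_ ?_
    · rw [ev_self, ev_self]; linear_combination -(hfm1 hm h2)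
    · intro i hij; rw [ev_other hij, ev_other hij]
  have c3 : (bouwer k m n).Adj ((0 : ZMod m), ev n i0 (-(f n (-1 : ZMod m))))
      (-1, ev n i0 (-(f n (-1 : ZMod m)))) :=
    (mkAdjStr hm (-1) 0 (ev n i0 (-(f n (-1 : ZMod m)))) (by ring)).symm
  have c4 : (bouwer k m n).Adj ((-1 : ZMod m), ev n i0 (-(f n (-1 : ZMod m)))) (0, 0) := by
    refine mkAdj hm (-1) 0 (ev n i0 (-(f n (-1 : ZMod m)))) 0 (by ring) i0 ?_ ?_
    · simp only [Pi.zero_apply]; rw [ev_self]; ring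
    · intro i hij; rw [ev_other hij]; simp
  -- Step A : φ x1 = (0, ev jε (-1)) for some jε
  have hAx1 : (bouwer k m n).Adj ((1 : ZMod m), (0 : Fin (k-1) → ZMod n))
      (φ ((1 : ZMod m), ev n i0 1)) := by
    have := hT hadj_ux1; rwa [hu] at this
  have hstep4 : (bouwer k m n).Adj (φ ((0 : ZMod m), ev n i0 (-1)))
      ((0 : ZMod m), (0 : Fin (k-1) → ZMod n)) := by
    have := hT a4; rwa [hv] at this
  rcases nbr_v hm h2 hAx1 with h20 | ⟨j, h2j⟩ | hu0' | ⟨jε, hjε⟩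
  · -- φ x1 = (2,0) : impossible by F2lem
    refine F2lem hm hn h2 (p := φ ((2 : ZMod m), ev n i0 1)) ?_ (hT a2) (hT a3) hstep4 ?_ ?_ ?_
    · have := hT a1; rwa [h20] at this
    · intro he
      exact pne_fst mne20 (injφ (he.trans hu.symm))
    · intro he
      rw [← h20] at he
      exact pne_app i0 (by dsimp only; rw [ev_self, ev_self]; exact nem11) (injφ he)
    · intro he
      refine pne_app i0 ?_ (injφ (he.trans hu.symm))
      dsimp only; rw [ev_self]; simp only [Pi.zero_apply]; exact nem10
  · -- φ x1 = (2, ev j 2) : impossible by two applications of F3lem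
    have hP1 : φ ((0 : ZMod m), ev n i0 1) = (1, ev n j 2) := by
      refine F3lem hm hn h2 j (p := φ ((0 : ZMod m), ev n i0 1)) ?_ (hT b2) (hT b3) ?_ ?_ ?_ ?_
      · have := hT b1; rwa [h2j] at this
      · have := hT b4; rwa [hv] at this
      · intro he
        refine pne_app i0 ?_ (injφ (he.trans hu.symm))
        dsimp only; rw [ev_self]; simp only [Pi.zero_apply]; exact ne10
      · intro he
        rw [← h2j] at he
        exact pne_app i0 (by dsimp only; rw [ev_self, ev_self]; exact ne21) (injφ he)
      · intro he
        exact pne_fst mne20 (injφ (he.trans hu.symm))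
    have hP2 : φ ((2 : ZMod m), ev n i0 1) = (1, ev n j 2) := by
      refine F3lem hm hn h2 j (p := φ ((2 : ZMod m), ev n i0 1)) ?_ (hT a2) (hT a3) hstep4 ?_ ?_ ?_
      · have := hT a1; rwa [h2j] at this
      · intro he
        exact pne_fst mne20 (injφ (he.trans hu.symm))
      · intro he
        rw [← h2j] at he
        exact pne_app i0 (by dsimp only; rw [ev_self, ev_self]; exact nem11) (injφ he)
      · intro he
        refine pne_app i0 ?_ (injφ (he.trans hu.symm))
        dsimp only; rw [ev_self]; simp only [Pi.zero_apply]; exact nem10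
    exact pne_fst mne02 (injφ (hP1.trans hP2.symm))
  · -- φ x1 = (0,0) : contradicts injectivity
    exact pne_app i0 (by dsimp only; rw [ev_self]; simp only [Pi.zero_apply]; exact ne10)
      (injφ (hu0'.trans hv.symm))
  · -- Step B : φ (0, -e) = (1, ev l 1) for some l
    have hstep4' : (bouwer k m n).Adj (φ ((1 : ZMod m), ev n i0 1))
        ((1 : ZMod m), (0 : Fin (k-1) → ZMod n)) := by
      have := hT hadj_ux1; rw [hu] at this; exact this.symm
    rcases nbr_u hm h2 hstep4.symm with hBv | ⟨l, hBl⟩ | hBm | ⟨l, hBl'⟩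
    · -- φ (0,-e) = (1,0) : contradicts injectivity
      exact pne_app i0 (by dsimp only; rw [ev_self]; simp only [Pi.zero_apply]; exact nem10)
        (injφ (hBv.trans hu.symm))
    · -- main case : φ (0,-e) = (1, ev l 1)
      have hrlev : (φ ((0 : ZMod m), ev n i0 (-1))).1 = 1 := by rw [hBl]
      -- Step C : level of W := φ (2, e1) is 1
      have hCz : (bouwer k m n).Adj ((0 : ZMod m), ev n jε (-1))
          (φ ((2 : ZMod m), ev n i0 1)) := by
        have := hT a1; rwa [hjε] at this
      have hW1 : (φ ((2 : ZMod m), ev n i0 1)).1 = 1 := by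
        refine F4lem hm hn h2 jε hCz (hT a2) (hT a3) hstep4 hrlev ?_
        intro he
        rw [← hjε] at he
        exact pne_app i0 (by dsimp only; rw [ev_self, ev_self]; exact nem11) (injφ he)
      -- Step D : shape of W
      have hWnv : φ ((2 : ZMod m), ev n i0 1) ≠ ((1 : ZMod m), (0 : Fin (k-1) → ZMod n)) := by
        intro he
        exact pne_fst mne20 (injφ (he.trans hu.symm))
      rcases nbr_up hm hCz (by rw [hW1]; dsimp only; ring) with hsh | ⟨l2, hoth2, hl2⟩
      · -- Shape 1 : W = (1, ev jε (-1))
        have hWeq : φ ((2 : ZMod m), ev n i0 1) = ((1 : ZMod m), ev n jε (-1)) :=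
          Prod.ext hW1 hsh
        -- witness path W ~ (0,-2e) ~ (1,-2e) ~ (2,0) ~ v
        have w1 : (bouwer k m n).Adj ((1 : ZMod m), ev n jε (-1)) (0, ev n jε (-2)) := by
          refine (mkAdj hm 0 1 (ev n jε (-2)) (ev n jε (-1)) (by ring) jε ?_ ?_).symm
          · rw [ev_self, ev_self, f_zero hm]; ring
          · intro i hij; rw [ev_other hij, ev_other hij]
        have w2 : (bouwer k m n).Adj ((0 : ZMod m), ev n jε (-2)) (1, ev n jε (-2)) :=
          mkAdjStr hm 0 1 (ev n jε (-2)) (by ring)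
        have w3 : (bouwer k m n).Adj ((1 : ZMod m), ev n jε (-2)) (2, 0) := by
          refine mkAdj hm 1 2 (ev n jε (-2)) 0 (by ring) jε ?_ ?_
          · simp only [Pi.zero_apply]; rw [ev_self, hf1 hm h2]; ring
          · intro i hij; rw [ev_other hij]; simp
        have w4 : (bouwer k m n).Adj ((2 : ZMod m), (0 : Fin (k-1) → ZMod n)) (1, 0) :=
          (mkAdjStr hm 1 2 0 (by ring)).symm
        have hsymW : φ.symm ((1 : ZMod m), ev n jε (-1)) = ((2 : ZMod m), ev n i0 1) := by
          rw [← hWeq, Equiv.symm_apply_apply]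
        have hF1 : (bouwer k m n).Adj ((2 : ZMod m), ev n i0 1)
            (φ.symm ((0 : ZMod m), ev n jε (-2))) := by
          have := hT' w1; rwa [hsymW] at this
        have hF4 : (bouwer k m n).Adj (φ.symm ((2 : ZMod m), (0 : Fin (k-1) → ZMod n)))
            ((0 : ZMod m), (0 : Fin (k-1) → ZMod n)) := by
          have := hT' w4; rwa [hsv] at this
        have hfin := F5lem hm hn h2 i0 hF1 (hT' w2) (hT' w3) hF4 ?_ ?_ ?_
        · have := congrArg φ hfin
          rw [Equiv.apply_symm_apply, hv] at this
          exact pne_fst mne20 this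
        · intro he
          have := congrArg φ he
          rw [Equiv.apply_symm_apply, hjε] at this
          exact pne_app jε (by dsimp only; rw [ev_self, ev_self]; exact nem21) this
        · intro he
          have := congrArg φ he
          rw [Equiv.apply_symm_apply, hWeq] at this
          exact pne_app jε (by dsimp only; rw [ev_self, ev_self]; exact nem21) this
        · intro he
          have := congrArg φ he
          rw [Equiv.apply_symm_apply, hjε] at this
          exact pne_fst mne20 this
      · -- Shape 2
        have hfl2 : f n ((0 : ZMod m), ev n jε (-1)).1 = 1 := f_zero hm
        rw [hfl2] at hl2
        by_cases hl2jε : l2 = jε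
        · -- W = (1,0) = v : contradiction
          subst hl2jε
          refine hWnv (Prod.ext hW1 (funext fun i => ?_))
          show (φ ((2 : ZMod m), ev n i0 1)).2 i = (0 : Fin (k-1) → ZMod n) i
          simp only [Pi.zero_apply]
          by_cases hij : i = l2
          · subst hij
            rw [hl2]
            dsimp only
            rw [ev_self]; ring
          · rw [hoth2 i hij]
            dsimp only
            rw [ev_other ?_]
            · intro hijε; exact hij hijε
        · -- genuine shape 2 : W.2 l2 = 1, W.2 jε = -1, else 0
          have hWl : (φ ((2 : ZMod m), ev n i0 1)).2 l2 = 1 := by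
            rw [hl2]; dsimp only; rw [ev_other hl2jε]; ring
          have hWjε : (φ ((2 : ZMod m), ev n i0 1)).2 jε = -1 := by
            have := hoth2 jε (fun h => hl2jε h.symm)
            rw [this]; dsimp only; rw [ev_self]
          have hWo : ∀ i, i ≠ l2 → i ≠ jε → (φ ((2 : ZMod m), ev n i0 1)).2 i = 0 := by
            intro i h1' h2''
            rw [hoth2 i h1']; dsimp only; rw [ev_other h2'']
          -- witness path W ~ (0,b2) ~ (1,b3) ~ (2, ev l2 2) ~ v
          have w1 : (bouwer k m n).Adj ((1 : ZMod m), (φ ((2 : ZMod m), ev n i0 1)).2)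
              (0, fun i => if i = jε then (-2 : ZMod n) else (φ ((2 : ZMod m), ev n i0 1)).2 i) := by
            refine (mkAdj hm 0 1 _ _ (by ring) jε ?_ ?_).symm
            · rw [hWjε, if_pos rfl, f_zero hm]; ring
            · intro i hij; rw [if_neg hij]
          have w2 : (bouwer k m n).Adj
              ((0 : ZMod m), fun i => if i = jε then (-2 : ZMod n) else (φ ((2 : ZMod m), ev n i0 1)).2 i)
              (1, fun i => if i = l2 then (2 : ZMod n) else if i = jε then (-2 : ZMod n) else (φ ((2 : ZMod m), ev n i0 1)).2 i) := by
            refine mkAdj hm 0 1 _ _ (by ring) l2 ?_ ?_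
            · rw [if_pos rfl, if_neg hl2jε, hWl, f_zero hm]; ring
            · intro i hij; rw [if_neg hij]
          have w3 : (bouwer k m n).Adj
              ((1 : ZMod m), fun i => if i = l2 then (2 : ZMod n) else if i = jε then (-2 : ZMod n) else (φ ((2 : ZMod m), ev n i0 1)).2 i)
              (2, ev n l2 2) := by
            refine mkAdj hm 1 2 _ _ (by ring) jε ?_ ?_
            · rw [ev_other (fun h => hl2jε h.symm), if_neg (fun h : jε = l2 => hl2jε h.symm), if_pos rfl, hf1 hm h2]; ring
            · intro i hij
              by_cases hil : i = l2
              · subst hil; rw [ev_self, if_pos rfl]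
              · rw [ev_other hil, if_neg hil, if_neg hij, hWo i hil hij]
          have w4 : (bouwer k m n).Adj ((2 : ZMod m), ev n l2 2) (1, 0) := by
            refine (mkAdj hm 1 2 0 (ev n l2 2) (by ring) l2 ?_ ?_).symm
            · simp only [Pi.zero_apply]; rw [ev_self, hf1 hm h2]; ring
            · intro i hij; rw [ev_other hij]; simp
          have hWpair : φ ((2 : ZMod m), ev n i0 1)
              = ((1 : ZMod m), (φ ((2 : ZMod m), ev n i0 1)).2) := Prod.ext hW1 rfl
          have hsymW : φ.symm ((1 : ZMod m), (φ ((2 : ZMod m), ev n i0 1)).2)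
              = ((2 : ZMod m), ev n i0 1) := by
            rw [← hWpair, Equiv.symm_apply_apply]
          have hF1 : (bouwer k m n).Adj ((2 : ZMod m), ev n i0 1)
              (φ.symm ((0 : ZMod m), fun i => if i = jε then (-2 : ZMod n) else (φ ((2 : ZMod m), ev n i0 1)).2 i)) := by
            have := hT' w1; rwa [hsymW] at this
          have hF4 : (bouwer k m n).Adj (φ.symm ((2 : ZMod m), ev n l2 2))
              ((0 : ZMod m), (0 : Fin (k-1) → ZMod n)) := by
            have := hT' w4; rwa [hsv] at this
          have hfin := F5lem hm hn h2 i0 hF1 (hT' w2) (hT' w3) hF4 ?_ ?_ ?_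
          · have := congrArg φ hfin
            rw [Equiv.apply_symm_apply, hv] at this
            exact pne_fst mne20 this
          · intro he
            have := congrArg φ he
            rw [Equiv.apply_symm_apply, hjε] at this
            refine pne_app l2 ?_ this
            dsimp only
            rw [if_neg hl2jε, hWl, ev_other hl2jε]
            exact ne10
          · intro he
            have := congrArg φ he
            rw [Equiv.apply_symm_apply, hWpair] at this
            refine pne_app l2 ?_ this
            dsimp only
            rw [if_pos rfl, hWl]
            exact ne21
          · intro he
            have := congrArg φ he
            rw [Equiv.apply_symm_apply, hjε] at this
            exact pne_fst mne20 this
    · -- φ (0,-e) = (-1, 0) : impossible by F2plem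
      refine F2plem hm hn h2 (p := φ ((1 : ZMod m), ev n i0 (-1))) ?_ ((hT a2).symm)
        ((hT a1).symm) hstep4' ?_ ?_
      · have := (hT a3).symm; rwa [hBm] at this
      · intro he
        exact pne_app i0 (by dsimp only; rw [ev_self]; simp only [Pi.zero_apply]; exact nem10)
          (injφ (he.trans hv.symm))
      · intro he
        exact pne_app i0 (by dsimp only; rw [ev_self]; simp only [Pi.zero_apply]; exact ne10)
          (injφ (he.trans hv.symm))
    · -- φ (0,-e) = (-1, ev l (-t)) : impossible by two applications of F3plem
      have hQ1 : φ ((1 : ZMod m), ev n i0 (-1)) = (0, ev n l (-(f n (-1 : ZMod m)))) := by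
        refine F3plem hm hn h2 l (p := φ ((1 : ZMod m), ev n i0 (-1))) ?_ ((hT a2).symm)
          ((hT a1).symm) hstep4' ?_ ?_
        · have := (hT a3).symm; rwa [hBl'] at this
        · intro he
          exact pne_app i0 (by dsimp only; rw [ev_self]; simp only [Pi.zero_apply]; exact nem10)
            (injφ (he.trans hv.symm))
        · intro he
          exact pne_app i0 (by dsimp only; rw [ev_self]; simp only [Pi.zero_apply]; exact ne10)
            (injφ (he.trans hv.symm))
      have hQ2 : φ ((-1 : ZMod m), ev n i0 (-1)) = (0, ev n l (-(f n (-1 : ZMod m)))) := by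
        refine F3plem hm hn h2 l (p := φ ((-1 : ZMod m), ev n i0 (-1))) ?_ (hT c2)
          (hT c3) ?_ ?_ ?_
        · have := hT c1; rwa [hBl'] at this
        · have := hT c4; rwa [hu] at this
        · intro he
          exact pne_fst mnem11 (injφ (he.trans hv.symm))
        · intro he
          exact pne_fst mnem11 (injφ (he.trans hv.symm))
      exact pne_fst mne1m1 (injφ (hQ1.trans hQ2.symm))

end main

end classif
end graph
end BouwerPf

/-- If `m > 6` and `n > 7`, then no automorphism of the Bouwer graph `B(k,m,n)`
interchanges the vertices `(0,0)` and `(1,0)`; in particular `B(k,m,n)` is not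
arc-transitive. -/
theorem bouwer_half_arc_transitive (k m n : ℕ) (hk : 1 < k) (hm : 6 < m) (hn : 7 < n)
    (h2 : (2 : ZMod n) ^ m = 1) :
    (¬ ∃ φ : Equiv.Perm (ZMod m × (Fin (k - 1) → ZMod n)),
      (∀ u v, (bouwer k m n).Adj u v ↔ (bouwer k m n).Adj (φ u) (φ v)) ∧
      φ ((0 : ZMod m), (0 : Fin (k - 1) → ZMod n)) = (1, 0) ∧ φ (1, 0) = (0, 0)) ∧
    ¬ (∀ u₁ v₁ u₂ v₂ : ZMod m × (Fin (k - 1) → ZMod n),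
        (bouwer k m n).Adj u₁ v₁ → (bouwer k m n).Adj u₂ v₂ →
        ∃ φ : Equiv.Perm (ZMod m × (Fin (k - 1) → ZMod n)),
          (∀ u v, (bouwer k m n).Adj u v ↔ (bouwer k m n).Adj (φ u) (φ v)) ∧
          φ u₁ = u₂ ∧ φ v₁ = v₂) := by
  have hadj : (bouwer k m n).Adj ((0 : ZMod m), (0 : Fin (k - 1) → ZMod n)) (1, 0) :=
    BouwerPf.mkAdjStr hm 0 1 0 (by ring)
  have main : ¬ ∃ φ : Equiv.Perm (ZMod m × (Fin (k - 1) → ZMod n)),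
      (∀ u v, (bouwer k m n).Adj u v ↔ (bouwer k m n).Adj (φ u) (φ v)) ∧
      φ ((0 : ZMod m), (0 : Fin (k - 1) → ZMod n)) = (1, 0) ∧ φ (1, 0) = (0, 0) := by
    rintro ⟨φ, hφ, hu, hv⟩
    exact BouwerPf.no_swap hk hm hn h2 φ hφ hu hv
  exact ⟨main, fun hAT => main (hAT _ _ _ _ hadj hadj.symm)⟩
end

section
/- For n = 3 and m even, the map sending each vertex (a, b) of B(k,m,3) to (1 − a, −b) is a graph automorphism that interchanges the adjacent vertices (0,0) and (1,0); consequently B(k,m,3) is arc-transitive (given its edge-transitivity). -/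
lemma bouwer_val_parity (m : ℕ) [NeZero m] (hme : Even m) (a : ZMod m) :
    (2 : ZMod 3) ^ ((-a).val) = 2 ^ a.val := by
  have hsum : (a.val + (-a).val) % m = 0 := by
    have := ZMod.val_add a (-a)
    simpa using this.symm
  have h2m : 2 ∣ m := hme.two_dvd
  have hpar : a.val % 2 = (-a).val % 2 := by
    have hdvd : m ∣ a.val + (-a).val := Nat.dvd_of_mod_eq_zero hsum
    have h2 : 2 ∣ a.val + (-a).val := dvd_trans h2m hdvd
    omega
  have h21 : (2 : ZMod 3) = -1 := by decide
  rw [h21]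
  rcases Nat.even_or_odd a.val with he | ho
  · have he' : Even ((-a).val) := by
      rcases he with ⟨t, ht⟩
      have : (-a).val % 2 = 0 := by omega
      exact Nat.even_iff.mpr this
    rw [he.neg_one_pow, he'.neg_one_pow]
  · have ho' : Odd ((-a).val) := by
      have : (-a).val % 2 = 1 := by
        have := Nat.odd_iff.mp ho
        omega
      exact Nat.odd_iff.mpr this
    rw [ho.neg_one_pow, ho'.neg_one_pow]

lemma bouwerRel_map (k m : ℕ) [NeZero m] (hme : Even m)
    (u v : ZMod m × (Fin (k - 1) → ZMod 3)) (h : bouwerRel k m 3 u v) :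
    bouwerRel k m 3 (1 - v.1, -v.2) (1 - u.1, -u.2) := by
  obtain ⟨h1, h2⟩ := h
  refine ⟨by rw [h1]; ring, ?_⟩
  rcases h2 with h2 | ⟨j, hij, hj⟩
  · left; rw [h2]
  · right
    refine ⟨j, fun i hi => by show -u.2 i = -v.2 i; rw [hij i hi], ?_⟩
    show -u.2 j = -v.2 j + 2 ^ ((1 - v.1).val)
    have : (1 : ZMod m) - v.1 = -u.1 := by rw [h1]; ring
    rw [this, bouwer_val_parity m hme u.1, hj]
    ring

/-- The involution `(a, b) ↦ (1 - a, -b)`. -/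
def bouwerFlip (k m : ℕ) : Equiv.Perm (ZMod m × (Fin (k - 1) → ZMod 3)) where
  toFun p := (1 - p.1, -p.2)
  invFun p := (1 - p.1, -p.2)
  left_inv p := by simp
  right_inv p := by simp

lemma bouwerFlip_adj (k m : ℕ) [NeZero m] (hme : Even m)
    (u v : ZMod m × (Fin (k - 1) → ZMod 3)) :
    (bouwer k m 3).Adj u v ↔ (bouwer k m 3).Adj (bouwerFlip k m u) (bouwerFlip k m v) := by
  have key : ∀ u v : ZMod m × (Fin (k - 1) → ZMod 3),
      (bouwer k m 3).Adj u v → (bouwer k m 3).Adj (bouwerFlip k m u) (bouwerFlip k m v) := by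
    intro u v h
    rw [bouwer, SimpleGraph.fromRel_adj] at h ⊢
    obtain ⟨hne, hrel⟩ := h
    refine ⟨fun hc => hne ((bouwerFlip k m).injective hc), ?_⟩
    rcases hrel with h | h
    · exact Or.inr (bouwerRel_map k m hme u v h)
    · exact Or.inl (bouwerRel_map k m hme v u h)
  constructor
  · exact key u v
  · intro h
    have := key _ _ h
    have hinv : ∀ p : ZMod m × (Fin (k - 1) → ZMod 3),
        bouwerFlip k m (bouwerFlip k m p) = p := fun p => by simp [bouwerFlip]
    rwa [hinv, hinv] at this

/-- For `n = 3` and `m` even, the map sending each vertex `(a, b)` of `B(k,m,3)`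
to `(1 - a, -b)` is a graph automorphism that interchanges the adjacent vertices
`(0,0)` and `(1,0)`; consequently, given edge-transitivity, `B(k,m,3)` is
arc-transitive. -/
theorem bouwer_n3_arc_transitive (k m : ℕ) (hk : 1 < k) (hm : 1 < m) (hme : Even m) :
    ((bouwer k m 3).Adj ((0 : ZMod m), (0 : Fin (k - 1) → ZMod 3)) (1, 0) ∧
     ∃ φ : Equiv.Perm (ZMod m × (Fin (k - 1) → ZMod 3)),
      (∀ u v, (bouwer k m 3).Adj u v ↔ (bouwer k m 3).Adj (φ u) (φ v)) ∧
      (∀ (a : ZMod m) (b : Fin (k - 1) → ZMod 3), φ (a, b) = (1 - a, -b)) ∧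
      φ ((0 : ZMod m), (0 : Fin (k - 1) → ZMod 3)) = (1, 0) ∧ φ (1, 0) = (0, 0)) ∧
    -- edge-transitivity implies arc-transitivity:
    ((∀ u₁ v₁ u₂ v₂ : ZMod m × (Fin (k - 1) → ZMod 3),
        (bouwer k m 3).Adj u₁ v₁ → (bouwer k m 3).Adj u₂ v₂ →
        ∃ φ : Equiv.Perm (ZMod m × (Fin (k - 1) → ZMod 3)),
          (∀ u v, (bouwer k m 3).Adj u v ↔ (bouwer k m 3).Adj (φ u) (φ v)) ∧
          ((φ u₁ = u₂ ∧ φ v₁ = v₂) ∨ (φ u₁ = v₂ ∧ φ v₁ = u₂))) →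
      (∀ u₁ v₁ u₂ v₂ : ZMod m × (Fin (k - 1) → ZMod 3),
        (bouwer k m 3).Adj u₁ v₁ → (bouwer k m 3).Adj u₂ v₂ →
        ∃ φ : Equiv.Perm (ZMod m × (Fin (k - 1) → ZMod 3)),
          (∀ u v, (bouwer k m 3).Adj u v ↔ (bouwer k m 3).Adj (φ u) (φ v)) ∧
          φ u₁ = u₂ ∧ φ v₁ = v₂)) := by
  haveI : NeZero m := ⟨by omega⟩
  haveI : Fact (1 < m) := ⟨hm⟩
  have hne01 : (0 : ZMod m) ≠ 1 := zero_ne_one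
  have hadj : (bouwer k m 3).Adj ((0 : ZMod m), (0 : Fin (k - 1) → ZMod 3)) (1, 0) := by
    rw [bouwer, SimpleGraph.fromRel_adj]
    refine ⟨?_, Or.inl ⟨by simp, Or.inl rfl⟩⟩
    intro hc
    exact hne01 (congrArg Prod.fst hc)
  have hflip := bouwerFlip_adj k m hme
  have hflip_eq : ∀ (a : ZMod m) (b : Fin (k - 1) → ZMod 3),
      bouwerFlip k m (a, b) = (1 - a, -b) := fun a b => rfl
  refine ⟨⟨hadj, bouwerFlip k m, hflip, hflip_eq, by simp [bouwerFlip], by simp [bouwerFlip]⟩, ?_⟩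
  intro het u₁ v₁ u₂ v₂ h₁ h₂
  obtain ⟨α, hα, hαe⟩ := het u₁ v₁ _ _ h₁ hadj
  obtain ⟨β, hβ, hβe⟩ := het u₂ v₂ _ _ h₂ hadj
  have hβ' : ∀ u v, (bouwer k m 3).Adj u v ↔ (bouwer k m 3).Adj (β.symm u) (β.symm v) := by
    intro u v
    have := hβ (β.symm u) (β.symm v)
    simpa using this.symm
  have hf0 : bouwerFlip k m ((0 : ZMod m), (0 : Fin (k - 1) → ZMod 3)) = (1, 0) := by
    simp [bouwerFlip]
  have hf1 : bouwerFlip k m ((1 : ZMod m), (0 : Fin (k - 1) → ZMod 3)) = (0, 0) := by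
    simp [bouwerFlip]
  -- compose: φ = β.symm ∘ (maybe flip) ∘ α
  rcases hαe with ⟨ha1, ha2⟩ | ⟨ha1, ha2⟩ <;> rcases hβe with ⟨hb1, hb2⟩ | ⟨hb1, hb2⟩
  · refine ⟨α.trans β.symm, fun u v => (hα u v).trans (hβ' _ _), ?_, ?_⟩
    · simp only [Equiv.trans_apply]
      rw [ha1, ← hb1, Equiv.symm_apply_apply]
    · simp only [Equiv.trans_apply]
      rw [ha2, ← hb2, Equiv.symm_apply_apply]
  · refine ⟨(α.trans (bouwerFlip k m)).trans β.symm,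
      fun u v => ((hα u v).trans (hflip _ _)).trans (hβ' _ _), ?_, ?_⟩
    · simp only [Equiv.trans_apply]
      rw [ha1, hf0, ← hb1, Equiv.symm_apply_apply]
    · simp only [Equiv.trans_apply]
      rw [ha2, hf1, ← hb2, Equiv.symm_apply_apply]
  · refine ⟨(α.trans (bouwerFlip k m)).trans β.symm,
      fun u v => ((hα u v).trans (hflip _ _)).trans (hβ' _ _), ?_, ?_⟩
    · simp only [Equiv.trans_apply]
      rw [ha1, hf1, ← hb1, Equiv.symm_apply_apply]
    · simp only [Equiv.trans_apply]
      rw [ha2, hf0, ← hb2, Equiv.symm_apply_apply]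
  · refine ⟨α.trans β.symm, fun u v => (hα u v).trans (hβ' _ _), ?_, ?_⟩
    · simp only [Equiv.trans_apply]
      rw [ha1, ← hb1, Equiv.symm_apply_apply]
    · simp only [Equiv.trans_apply]
      rw [ha2, ← hb2, Equiv.symm_apply_apply]
end

section
/- For k = 2 and m divisible by 4, the map taking (a, b) to (1 − a, −b) when a ≡ 0 or 1 (mod 4), and to (1 − a, 2 − b) when a ≡ 2 or 3 (mod 4), is a graph automorphism of B(2,m,5) that interchanges the adjacent vertices (0,0) and (1,0). -/


lemma zmod5_two_pow (x : ℕ) : (2 : ZMod 5) ^ x = 2 ^ (x % 4) := by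
  conv_lhs => rw [← Nat.div_add_mod x 4, pow_add, pow_mul]
  rw [show ((2:ZMod 5)^4) = 1 from by decide, one_pow, one_mul]

lemma val_add_one_mod4 {m : ℕ} (hm : 1 < m) (hm4 : 4 ∣ m) (a : ZMod m) :
    (a + 1).val % 4 = (a.val + 1) % 4 := by
  haveI : NeZero m := ⟨by omega⟩
  haveI : Fact (1 < m) := ⟨hm⟩
  rw [ZMod.val_add, ZMod.val_one, Nat.mod_mod_of_dvd _ hm4]

lemma neg_val_mod4 {m : ℕ} (hm : 1 < m) (hm4 : 4 ∣ m) (a : ZMod m) :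
    ((-a).val + a.val) % 4 = 0 := by
  haveI : NeZero m := ⟨by omega⟩
  have h : ((-a) + a).val = 0 := by simp
  rw [ZMod.val_add] at h
  have h2 : m ∣ ((-a).val + a.val) := Nat.dvd_of_mod_eq_zero h
  have h3 : 4 ∣ ((-a).val + a.val) := dvd_trans hm4 h2
  omega

lemma one_sub_val_mod4 {m : ℕ} (hm : 1 < m) (hm4 : 4 ∣ m) (a : ZMod m) :
    (1 - a).val % 4 = (5 - a.val % 4) % 4 := by
  have h1 : (1 : ZMod m) - a = (-a) + 1 := by ring
  rw [h1, val_add_one_mod4 hm hm4]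
  have h2 := neg_val_mod4 hm hm4 a
  omega

/-- Scalar form of the automorphism on the second coordinate. -/
def Ff (m : ℕ) (x : ZMod m) (y : ZMod 5) : ZMod 5 :=
  if x.val % 4 = 0 ∨ x.val % 4 = 1 then -y else 2 - y

lemma Ff_invol {m : ℕ} (hm : 1 < m) (hm4 : 4 ∣ m) (a : ZMod m) (y : ZMod 5) :
    Ff m (1 - a) (Ff m a y) = y := by
  have h1 := one_sub_val_mod4 hm hm4 a
  have h2 : a.val % 4 = 0 ∨ a.val % 4 = 1 ∨ a.val % 4 = 2 ∨ a.val % 4 = 3 := by omega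
  unfold Ff
  rcases h2 with h | h | h | h <;>
    · rw [show ((1:ZMod m) - a).val % 4 = (5 - a.val % 4) % 4 from h1, h]
      norm_num

lemma key_scalar {m : ℕ} (hm : 1 < m) (hm4 : 4 ∣ m) (a : ZMod m) (β γ : ZMod 5)
    (h : γ = β ∨ γ = β + 2 ^ a.val) :
    Ff m a β = Ff m (a + 1) γ ∨ Ff m a β = Ff m (a + 1) γ + 2 ^ ((-a).val) := by
  have h1 := val_add_one_mod4 hm hm4 a
  have h2 := neg_val_mod4 hm hm4 a
  rw [zmod5_two_pow a.val] at h
  rw [zmod5_two_pow ((-a).val)]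
  unfold Ff
  have hr : a.val % 4 = 0 ∨ a.val % 4 = 1 ∨ a.val % 4 = 2 ∨ a.val % 4 = 3 := by omega
  rcases hr with hr | hr | hr | hr <;>
    · rw [hr] at h ⊢
      rw [show (a+1).val % 4 = ((a.val % 4) + 1) % 4 by omega, hr]
      rw [show (-a).val % 4 = (4 - a.val % 4) % 4 by omega, hr]
      revert h
      revert β γ
      decide


/-- The candidate automorphism as a plain function. -/
def fmap (m : ℕ) : (ZMod m × (Fin (2 - 1) → ZMod 5)) → (ZMod m × (Fin (2 - 1) → ZMod 5)) :=
  fun p => (1 - p.1, fun i => Ff m p.1 (p.2 i))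

lemma fmap_invol (hm : 1 < m) (hm4 : 4 ∣ m) : Function.Involutive (fmap m) := by
  rintro ⟨a, b⟩
  unfold fmap
  refine Prod.ext ?_ ?_
  · show 1 - (1 - a) = a; ring
  · funext i
    exact Ff_invol hm hm4 a (b i)

lemma fmap_key (hm : 1 < m) (hm4 : 4 ∣ m) (u v : ZMod m × (Fin (2 - 1) → ZMod 5))
    (h : bouwerRel 2 m 5 u v) : bouwerRel 2 m 5 (fmap m v) (fmap m u) := by
  obtain ⟨a, b⟩ := u
  obtain ⟨a', c⟩ := v
  obtain ⟨h1, h2⟩ := h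
  simp only at h1
  subst h1
  constructor
  · show (1 : ZMod m) - a = (1 - (a + 1)) + 1
    ring
  · have hpt : c 0 = b 0 ∨ c 0 = b 0 + 2 ^ a.val := by
      rcases h2 with h2 | ⟨j, _, hj⟩
      · exact Or.inl (congrFun h2 0)
      · have hj0 : j = (0 : Fin (2 - 1)) := Fin.ext (by omega)
        rw [hj0] at hj
        exact Or.inr hj
    have hk := key_scalar hm hm4 a (b 0) (c 0) hpt
    have hfst : (fmap m (a + 1, c)).1 = -a := by
      show (1 : ZMod m) - (a + 1) = -a; ring
    rcases hk with hk | hk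
    · left
      funext i
      have hi : i = (0 : Fin (2 - 1)) := Fin.ext (by omega)
      rw [hi]
      exact hk
    · right
      refine ⟨0, fun i hi => absurd (Fin.ext (by omega : i.val = (0 : Fin (2-1)).val)) hi, ?_⟩
      show Ff m a (b 0) = Ff m (a + 1) (c 0) + 2 ^ ((fmap m (a + 1, c)).1).val
      rw [show (fmap m (a + 1, c)).1 = -a from hfst]
      exact hk

/-- For `k = 2` and `m` divisible by 4, the map taking `(a, b)` to `(1 - a, -b)`
when `a ≡ 0, 1 (mod 4)` and to `(1 - a, 2 - b)` when `a ≡ 2, 3 (mod 4)` is a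
graph automorphism of `B(2,m,5)` interchanging the adjacent vertices
`(0,0)` and `(1,0)`. -/
theorem bouwer_k2_n5_arc_transitive (m : ℕ) (hm : 1 < m) (hm4 : 4 ∣ m) :
    (bouwer 2 m 5).Adj ((0 : ZMod m), (0 : Fin (2 - 1) → ZMod 5)) (1, 0) ∧
    ∃ φ : Equiv.Perm (ZMod m × (Fin (2 - 1) → ZMod 5)),
      (∀ u v, (bouwer 2 m 5).Adj u v ↔ (bouwer 2 m 5).Adj (φ u) (φ v)) ∧
      (∀ (a : ZMod m) (b : Fin (2 - 1) → ZMod 5),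
        φ (a, b) = if a.val % 4 = 0 ∨ a.val % 4 = 1 then (1 - a, -b)
          else (1 - a, fun i => 2 - b i)) ∧
      φ ((0 : ZMod m), (0 : Fin (2 - 1) → ZMod 5)) = (1, 0) ∧ φ (1, 0) = (0, 0) := by
  haveI : NeZero m := ⟨by omega⟩
  haveI : Fact (1 < m) := ⟨hm⟩
  have hinv := fmap_invol hm hm4
  have hne01 : ((0 : ZMod m), (0 : Fin (2 - 1) → ZMod 5)) ≠ (1, 0) := by
    intro h
    have := congrArg Prod.fst h
    simp only at this
    exact zero_ne_one this
  constructor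
  · rw [bouwer, SimpleGraph.fromRel_adj]
    exact ⟨hne01, Or.inl ⟨by simp, Or.inl rfl⟩⟩
  · refine ⟨hinv.toPerm, ?_, ?_, ?_, ?_⟩
    · have hAdj : ∀ u v, (bouwer 2 m 5).Adj u v → (bouwer 2 m 5).Adj (fmap m u) (fmap m v) := by
        intro u v h
        rw [bouwer, SimpleGraph.fromRel_adj] at h ⊢
        refine ⟨fun he => h.1 (hinv.injective he), ?_⟩
        rcases h.2 with h2 | h2
        · exact Or.inr (fmap_key hm hm4 u v h2)
        · exact Or.inl (fmap_key hm hm4 v u h2)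
      intro u v
      refine ⟨hAdj u v, fun h => ?_⟩
      have := hAdj (fmap m u) (fmap m v) h
      rwa [hinv u, hinv v] at this
    · intro a b
      show fmap m (a, b) = _
      by_cases hc : a.val % 4 = 0 ∨ a.val % 4 = 1
      · rw [if_pos hc]
        refine Prod.ext rfl ?_
        funext i
        show Ff m a (b i) = -(b i)
        rw [Ff, if_pos hc]
      · rw [if_neg hc]
        refine Prod.ext rfl ?_
        funext i
        show Ff m a (b i) = 2 - b i
        rw [Ff, if_neg hc]
    · show fmap m (0, 0) = (1, 0)
      refine Prod.ext (by simp [fmap]) ?_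
      funext i
      show Ff m 0 ((0 : Fin (2-1) → ZMod 5) i) = (0 : Fin (2-1) → ZMod 5) i
      rw [Ff, if_pos (Or.inl (by simp))]
      simp
    · show fmap m (1, 0) = (0, 0)
      refine Prod.ext (by simp [fmap]) ?_
      funext i
      show Ff m 1 ((0 : Fin (2-1) → ZMod 5) i) = (0 : Fin (2-1) → ZMod 5) i
      rw [Ff, if_pos (Or.inr (by rw [ZMod.val_one]))]
      simp
end

section
/- For m > 6 and n > 7, no 3-arc in B(k,m,n) starting at (0,0) ends at (0,0); in particular B(k,m,n) contains no triangle through (0,0). -/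
lemma bouwer_adj_fst {k m n : ℕ} {u v : ZMod m × (Fin (k - 1) → ZMod n)}
    (h : (bouwer k m n).Adj u v) : v.1 = u.1 + 1 ∨ u.1 = v.1 + 1 := by
  rcases h with ⟨-, h | h⟩
  · exact Or.inl h.1
  · exact Or.inr h.1

lemma bouwer_key {m : ℕ} (hm : 6 < m) (a b c : ZMod m)
    (h1 : a = 0 + 1 ∨ (0 : ZMod m) = a + 1)
    (h2 : b = a + 1 ∨ a = b + 1)
    (h3 : c = b + 1 ∨ b = c + 1) : c ≠ 0 := by
  have : NeZero m := ⟨by omega⟩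
  have e1 : ((1 : ℕ) : ZMod m) ≠ 0 := by
    intro h
    rw [ZMod.natCast_eq_zero_iff] at h
    have := Nat.le_of_dvd (by norm_num) h
    omega
  have e3 : ((3 : ℕ) : ZMod m) ≠ 0 := by
    intro h
    rw [ZMod.natCast_eq_zero_iff] at h
    have := Nat.le_of_dvd (by norm_num) h
    omega
  push_cast at e1 e3
  intro hc
  rcases h1 with h1 | h1 <;> rcases h2 with h2 | h2 <;> rcases h3 with h3 | h3
  · exact e3 (by linear_combination hc - h1 - h2 - h3)
  · exact e1 (by linear_combination -h1 - h2 + h3 + hc)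
  · exact e1 (by linear_combination -h1 + h2 - h3 + hc)
  · exact e1 (by linear_combination h1 - h2 - h3 - hc)
  · exact e1 (by linear_combination h1 - h2 - h3 + hc)
  · exact e1 (by linear_combination -h1 + h2 - h3 - hc)
  · exact e1 (by linear_combination -h1 - h2 + h3 - hc)
  · exact e3 (by linear_combination -h1 - h2 - h3 - hc)

/-- For `m > 6` and `n > 7`, no 3-arc in `B(k,m,n)` starting at `(0,0)` ends at
`(0,0)`; in particular `B(k,m,n)` contains no triangle through `(0,0)`. -/
theorem bouwer_threearc_not_closed (k m n : ℕ) (hk : 1 < k) (hm : 6 < m) (hn : 7 < n)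
    (h2 : (2 : ZMod n) ^ m = 1) :
    (∀ v₁ v₂ v₃ : ZMod m × (Fin (k - 1) → ZMod n),
      (bouwer k m n).Adj ((0 : ZMod m), (0 : Fin (k - 1) → ZMod n)) v₁ →
      (bouwer k m n).Adj v₁ v₂ → (bouwer k m n).Adj v₂ v₃ →
      ((0 : ZMod m), (0 : Fin (k - 1) → ZMod n)) ≠ v₂ → v₁ ≠ v₃ →
      v₃ ≠ (0, 0)) ∧
    ¬ ∃ u w : ZMod m × (Fin (k - 1) → ZMod n),
      (bouwer k m n).Adj ((0 : ZMod m), (0 : Fin (k - 1) → ZMod n)) u ∧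
      (bouwer k m n).Adj u w ∧ (bouwer k m n).Adj w (0, 0) := by
  constructor
  · intro v₁ v₂ v₃ ha hb hc _ _
    have h1 := bouwer_adj_fst ha
    have h2' := bouwer_adj_fst hb
    have h3 := bouwer_adj_fst hc
    have := bouwer_key hm v₁.1 v₂.1 v₃.1 h1 h2' h3
    intro h
    exact this (by rw [h])
  · rintro ⟨u, w, ha, hb, hc⟩
    have h1 := bouwer_adj_fst ha
    have h2' := bouwer_adj_fst hb
    have h3 := bouwer_adj_fst hc
    exact bouwer_key hm u.1 w.1 0 h1 h2' h3 rfl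
end
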